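/- arXiv:2311.11217 — 7 statements merged into one kernel-verified Lean document; each statement's English description precedes it below -/
import Mathlib

section
/- Let (Y₁,…,Yₘ) be an associated random vector on a probability space, let y₁,…,yₘ be real numbers, and let A and B be subsets of {1,…,m}. Then P{Yⱼ ≤ yⱼ for all j ∈ A ∪ B} − P{Yⱼ ≤ yⱼ for all j ∈ A}·P{Yₖ ≤ yₖ for all k ∈ B} ≤ Σ_{j∈A} Σ_{k∈B} ( P{Yⱼ ≤ yⱼ and Yₖ ≤ yₖ} − P{Yⱼ ≤ yⱼ}·P{Yₖ ≤ yₖ} ). -/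
open MeasureTheory

/-- A random vector `Y = (Y₁, …, Yₘ)` on a probability space `(Ω, μ)` is *associated* if
`Cov(h₁(Y), h₂(Y)) ≥ 0` for every pair of bounded Borel-measurable functions
`h₁ h₂ : ℝᵐ → ℝ` that are nondecreasing in every coordinate. -/
def IsAssociated {Ω : Type*} [MeasurableSpace Ω] (μ : Measure Ω) {m : ℕ}
    (Y : Fin m → Ω → ℝ) : Prop :=
  ∀ h₁ h₂ : (Fin m → ℝ) → ℝ,
    Measurable h₁ → Measurable h₂ →
    (∃ C, ∀ x, |h₁ x| ≤ C) → (∃ C, ∀ x, |h₂ x| ≤ C) →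
    Monotone h₁ → Monotone h₂ →
    (∫ ω, h₁ (fun i => Y i ω) ∂μ) * (∫ ω, h₂ (fun i => Y i ω) ∂μ) ≤
      ∫ ω, h₁ (fun i => Y i ω) * h₂ (fun i => Y i ω) ∂μ

namespace AFKG

variable {m : ℕ} (y : Fin m → ℝ)

noncomputable def xi (j : Fin m) (x : Fin m → ℝ) : ℝ := if x j ≤ y j then 0 else 1
noncomputable def chi (j : Fin m) (x : Fin m → ℝ) : ℝ := if x j ≤ y j then 1 else 0

lemma chi_eq (j : Fin m) (x : Fin m → ℝ) : chi y j x = 1 - xi y j x := by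
  simp only [chi, xi]; split_ifs <;> ring

lemma xi_nonneg (j : Fin m) (x : Fin m → ℝ) : 0 ≤ xi y j x := by
  simp only [xi]; split_ifs <;> norm_num

lemma xi_abs (j : Fin m) (x : Fin m → ℝ) : |xi y j x| ≤ 1 := by
  simp only [xi]; split_ifs <;> norm_num

lemma chi_nonneg (j : Fin m) (x : Fin m → ℝ) : 0 ≤ chi y j x := by
  simp only [chi]; split_ifs <;> norm_num

lemma chi_le_one (j : Fin m) (x : Fin m → ℝ) : chi y j x ≤ 1 := by
  simp only [chi]; split_ifs <;> norm_num

lemma measurable_xi (j : Fin m) : Measurable (xi y j) :=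
  Measurable.ite (measurableSet_le (measurable_pi_apply j) measurable_const)
    measurable_const measurable_const

lemma measurable_chi (j : Fin m) : Measurable (chi y j) :=
  Measurable.ite (measurableSet_le (measurable_pi_apply j) measurable_const)
    measurable_const measurable_const

lemma monotone_xi (j : Fin m) : Monotone (xi y j) := by
  intro x x' hxx'
  simp only [xi]
  split_ifs with h h'
  · exact le_refl 0
  · norm_num
  · exact absurd (le_trans (hxx' j) ‹x' j ≤ y j›) h
  · exact le_refl 1

lemma antitone_chi (j : Fin m) : Antitone (chi y j) := by
  intro x x' hxx'
  simp only [chi_eq]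
  have := monotone_xi y j hxx'
  linarith

noncomputable def prodChi (S : Finset (Fin m)) (x : Fin m → ℝ) : ℝ :=
  ∏ j ∈ S, chi y j x

lemma prodChi_eq (S : Finset (Fin m)) (x : Fin m → ℝ) :
    prodChi y S x = if (∀ j ∈ S, x j ≤ y j) then 1 else 0 := by
  simp only [prodChi]
  split_ifs with h
  · exact Finset.prod_eq_one fun j hj => by simp [chi, h j hj]
  · push_neg at h
    obtain ⟨j, hj, hxj⟩ := h
    exact Finset.prod_eq_zero hj (by simp [chi, hxj])

lemma prodChi_nonneg (S : Finset (Fin m)) (x : Fin m → ℝ) : 0 ≤ prodChi y S x :=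
  Finset.prod_nonneg fun j _ => chi_nonneg y j x

lemma prodChi_le_one (S : Finset (Fin m)) (x : Fin m → ℝ) : prodChi y S x ≤ 1 :=
  Finset.prod_le_one (fun j _ => chi_nonneg y j x) (fun j _ => chi_le_one y j x)

lemma prodChi_abs (S : Finset (Fin m)) (x : Fin m → ℝ) : |prodChi y S x| ≤ 1 := by
  rw [abs_le]; constructor
  · linarith [prodChi_nonneg y S x]
  · exact prodChi_le_one y S x

lemma measurable_prodChi (S : Finset (Fin m)) : Measurable (prodChi y S) :=
  Finset.measurable_prod S fun j _ => measurable_chi y j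

lemma antitone_prodChi (S : Finset (Fin m)) : Antitone (prodChi y S) := by
  intro x x' hxx'
  exact Finset.prod_le_prod (fun j _ => chi_nonneg y j x')
    (fun j _ => antitone_chi y j hxx')

lemma prodChi_union (x : Fin m → ℝ) (A B : Finset (Fin m)) :
    prodChi y (A ∪ B) x = prodChi y A x * prodChi y B x := by
  simp only [prodChi_eq]
  by_cases h : ∀ j ∈ A ∪ B, x j ≤ y j
  · rw [if_pos h, if_pos, if_pos]
    · norm_num
    · exact fun j hj => h j (Finset.mem_union_right _ hj)
    · exact fun j hj => h j (Finset.mem_union_left _ hj)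
  · rw [if_neg h]
    push_neg at h
    obtain ⟨j, hj, hxj⟩ := h
    rcases Finset.mem_union.mp hj with hjA | hjB
    · rw [if_neg (fun hh => absurd (hh j hjA) (not_le.mpr hxj)), zero_mul]
    · have hB : (if ∀ j ∈ B, x j ≤ y j then (1:ℝ) else 0) = 0 :=
        if_neg (fun hh => absurd (hh j hjB) (not_le.mpr hxj))
      rw [hB, mul_zero]

/-- `F S x = 1 - prodChi S x`. -/
noncomputable def FF (S : Finset (Fin m)) (x : Fin m → ℝ) : ℝ := 1 - prodChi y S x
/-- `T S x = ∑ j in S, xi j x`. -/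
noncomputable def TT (S : Finset (Fin m)) (x : Fin m → ℝ) : ℝ := ∑ j ∈ S, xi y j x
/-- `D S = T S - F S`. -/
noncomputable def DD (S : Finset (Fin m)) (x : Fin m → ℝ) : ℝ := TT y S x - FF y S x

lemma monotone_FF (S : Finset (Fin m)) : Monotone (FF y S) := fun x x' h => by
  simp only [FF]
  linarith [antitone_prodChi y S h]

lemma measurable_FF (S : Finset (Fin m)) : Measurable (FF y S) :=
  measurable_const.sub (measurable_prodChi y S)

lemma FF_abs (S : Finset (Fin m)) (x : Fin m → ℝ) : |FF y S x| ≤ 1 := by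
  rw [abs_le, FF]
  constructor <;> [linarith [prodChi_le_one y S x]; linarith [prodChi_nonneg y S x]]

lemma monotone_TT (S : Finset (Fin m)) : Monotone (TT y S) :=
  fun _ _ h => Finset.sum_le_sum fun j _ => monotone_xi y j h

lemma measurable_TT (S : Finset (Fin m)) : Measurable (TT y S) :=
  Finset.measurable_sum S fun j _ => measurable_xi y j

lemma TT_abs (S : Finset (Fin m)) (x : Fin m → ℝ) : |TT y S x| ≤ S.card := by
  calc |TT y S x| ≤ ∑ j ∈ S, |xi y j x| := Finset.abs_sum_le_sum_abs _ _
    _ ≤ ∑ j ∈ S, 1 := Finset.sum_le_sum fun j _ => xi_abs y j x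
    _ = S.card := by simp

lemma DD_eq_max (S : Finset (Fin m)) (x : Fin m → ℝ) :
    DD y S x = max (TT y S x - 1) 0 := by
  by_cases h : ∀ j ∈ S, x j ≤ y j
  · have hT : TT y S x = 0 := Finset.sum_eq_zero fun j hj => by simp [xi, h j hj]
    have hP : prodChi y S x = 1 := by rw [prodChi_eq, if_pos h]
    simp [DD, FF, hT, hP]
  · push_neg at h
    obtain ⟨j, hj, hxj⟩ := h
    have hP : prodChi y S x = 0 := by rw [prodChi_eq, if_neg]; push_neg; exact ⟨j, hj, hxj⟩
    have hT : (1:ℝ) ≤ TT y S x := by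
      have : xi y j x = 1 := by simp [xi, hxj]
      calc (1:ℝ) = xi y j x := this.symm
        _ ≤ TT y S x := Finset.single_le_sum (fun k _ => xi_nonneg y k x) hj
    rw [DD, FF, hP, max_eq_left (by linarith)]
    ring

lemma monotone_DD (S : Finset (Fin m)) : Monotone (DD y S) := by
  have : DD y S = fun x => max (TT y S x - 1) 0 := funext (DD_eq_max y S)
  rw [this]
  exact fun x x' h => max_le_max (by linarith [monotone_TT y S h]) le_rfl

lemma measurable_DD (S : Finset (Fin m)) : Measurable (DD y S) :=
  (measurable_TT y S).sub (measurable_FF y S)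

lemma DD_abs (S : Finset (Fin m)) (x : Fin m → ℝ) : |DD y S x| ≤ S.card + 1 := by
  have h1 : |TT y S x - FF y S x| ≤ |TT y S x| + |FF y S x| := by
    rw [sub_eq_add_neg]
    exact (abs_add_le _ _).trans (by rw [abs_neg])
  calc |DD y S x| ≤ |TT y S x| + |FF y S x| := h1
    _ ≤ S.card + 1 := add_le_add (TT_abs y S x) (FF_abs y S x)


section Main

variable {Ω : Type*} [MeasurableSpace Ω] {μ : Measure Ω} [IsProbabilityMeasure μ]
  {m : ℕ} {Y : Fin m → Ω → ℝ}

lemma abs_mul_le {α : Type*} {h₁ h₂ : α → ℝ} {C₁ C₂ : ℝ}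
    (h1 : ∀ x, |h₁ x| ≤ C₁) (h2 : ∀ x, |h₂ x| ≤ C₂) :
    ∀ x, |h₁ x * h₂ x| ≤ C₁ * C₂ := fun x => by
  rw [abs_mul]
  exact mul_le_mul (h1 x) (h2 x) (abs_nonneg _) ((abs_nonneg _).trans (h1 x))

lemma integrable_comp (hY : ∀ j, Measurable (Y j))
    {h : (Fin m → ℝ) → ℝ} (hm : Measurable h) {C : ℝ} (hC : ∀ x, |h x| ≤ C) :
    Integrable (fun ω => h (fun i => Y i ω)) μ := by
  have hmeas : Measurable fun ω => h (fun i => Y i ω) :=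
    hm.comp (measurable_pi_lambda _ hY)
  refine ⟨hmeas.aestronglyMeasurable, ?_⟩
  apply HasFiniteIntegral.of_bounded (C := C)
  filter_upwards with ω
  simpa [Real.norm_eq_abs] using hC _

lemma main_ineq (hY : ∀ j, Measurable (Y j)) (hassoc : IsAssociated μ Y)
    (y : Fin m → ℝ) (A B : Finset (Fin m)) :
    (∫ ω, prodChi y A (fun i => Y i ω) * prodChi y B (fun i => Y i ω) ∂μ) -
      (∫ ω, prodChi y A (fun i => Y i ω) ∂μ) * (∫ ω, prodChi y B (fun i => Y i ω) ∂μ) ≤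
    ∑ j ∈ A, ∑ k ∈ B,
      ((∫ ω, chi y j (fun i => Y i ω) * chi y k (fun i => Y i ω) ∂μ) -
        (∫ ω, chi y j (fun i => Y i ω) ∂μ) * (∫ ω, chi y k (fun i => Y i ω) ∂μ)) := by
  classical
  -- integrability of the basic composed functions
  have iA : Integrable (fun ω => prodChi y A (fun i => Y i ω)) μ :=
    integrable_comp hY (measurable_prodChi y A) (prodChi_abs y A)
  have iB : Integrable (fun ω => prodChi y B (fun i => Y i ω)) μ :=
    integrable_comp hY (measurable_prodChi y B) (prodChi_abs y B)
  have iAB : Integrable (fun ω => prodChi y A (fun i => Y i ω) * prodChi y B (fun i => Y i ω)) μ :=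
    integrable_comp hY ((measurable_prodChi y A).mul (measurable_prodChi y B))
      (abs_mul_le (prodChi_abs y A) (prodChi_abs y B))
  have iTA : Integrable (fun ω => TT y A (fun i => Y i ω)) μ :=
    integrable_comp hY (measurable_TT y A) (TT_abs y A)
  have iTB : Integrable (fun ω => TT y B (fun i => Y i ω)) μ :=
    integrable_comp hY (measurable_TT y B) (TT_abs y B)
  have iFA : Integrable (fun ω => FF y A (fun i => Y i ω)) μ :=
    integrable_comp hY (measurable_FF y A) (FF_abs y A)
  have iFB : Integrable (fun ω => FF y B (fun i => Y i ω)) μ :=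
    integrable_comp hY (measurable_FF y B) (FF_abs y B)
  have iTT : Integrable (fun ω => TT y A (fun i => Y i ω) * TT y B (fun i => Y i ω)) μ :=
    integrable_comp hY ((measurable_TT y A).mul (measurable_TT y B))
      (abs_mul_le (TT_abs y A) (TT_abs y B))
  have iFT : Integrable (fun ω => FF y A (fun i => Y i ω) * TT y B (fun i => Y i ω)) μ :=
    integrable_comp hY ((measurable_FF y A).mul (measurable_TT y B))
      (abs_mul_le (FF_abs y A) (TT_abs y B))
  have iFF : Integrable (fun ω => FF y A (fun i => Y i ω) * FF y B (fun i => Y i ω)) μ :=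
    integrable_comp hY ((measurable_FF y A).mul (measurable_FF y B))
      (abs_mul_le (FF_abs y A) (FF_abs y B))
  have ixi : ∀ j : Fin m, Integrable (fun ω => xi y j (fun i => Y i ω)) μ :=
    fun j => integrable_comp hY (measurable_xi y j) (xi_abs y j)
  have ixx : ∀ j k : Fin m,
      Integrable (fun ω => xi y j (fun i => Y i ω) * xi y k (fun i => Y i ω)) μ :=
    fun j k => integrable_comp hY ((measurable_xi y j).mul (measurable_xi y k))
      (abs_mul_le (xi_abs y j) (xi_abs y k))
  have ichi : ∀ j : Fin m, Integrable (fun ω => chi y j (fun i => Y i ω)) μ :=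
    fun j => integrable_comp hY (measurable_chi y j)
      (fun x => abs_le.mpr ⟨by linarith [chi_nonneg y j x], chi_le_one y j x⟩)
  have icc : ∀ j k : Fin m,
      Integrable (fun ω => chi y j (fun i => Y i ω) * chi y k (fun i => Y i ω)) μ :=
    fun j k => integrable_comp hY ((measurable_chi y j).mul (measurable_chi y k))
      (abs_mul_le (fun x => abs_le.mpr ⟨by linarith [chi_nonneg y j x], chi_le_one y j x⟩)
        (fun x => abs_le.mpr ⟨by linarith [chi_nonneg y k x], chi_le_one y k x⟩))
  -- names for the basic integrals
  set a := ∫ ω, prodChi y A (fun i => Y i ω) ∂μ with ha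
  set b := ∫ ω, prodChi y B (fun i => Y i ω) ∂μ with hb
  set c := ∫ ω, prodChi y A (fun i => Y i ω) * prodChi y B (fun i => Y i ω) ∂μ with hc
  set tA := ∫ ω, TT y A (fun i => Y i ω) ∂μ with htA
  set tB := ∫ ω, TT y B (fun i => Y i ω) ∂μ with htB
  set tt := ∫ ω, TT y A (fun i => Y i ω) * TT y B (fun i => Y i ω) ∂μ with htt
  set m1 := ∫ ω, FF y A (fun i => Y i ω) * TT y B (fun i => Y i ω) ∂μ with hm1
  -- integrals of FF
  have hFAint : ∫ ω, FF y A (fun i => Y i ω) ∂μ = 1 - a := by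
    simp only [FF]
    rw [integral_sub (integrable_const 1) iA, integral_const]
    simp [measure_univ]
    exact ha.symm
  have hFBint : ∫ ω, FF y B (fun i => Y i ω) ∂μ = 1 - b := by
    simp only [FF]
    rw [integral_sub (integrable_const 1) iB, integral_const]
    simp [measure_univ]
    exact hb.symm
  have hFFint : ∫ ω, FF y A (fun i => Y i ω) * FF y B (fun i => Y i ω) ∂μ
      = 1 - a - b + c := by
    have hpt : (fun ω => FF y A (fun i => Y i ω) * FF y B (fun i => Y i ω))
        = fun ω => 1 - prodChi y A (fun i => Y i ω) - prodChi y B (fun i => Y i ω)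
            + prodChi y A (fun i => Y i ω) * prodChi y B (fun i => Y i ω) := by
      funext ω; simp only [FF]; ring
    have i1 : Integrable (fun ω => 1 - prodChi y A (fun i => Y i ω)) μ :=
      (integrable_const 1).sub iA
    have i2 : Integrable
        (fun ω => 1 - prodChi y A (fun i => Y i ω) - prodChi y B (fun i => Y i ω)) μ :=
      i1.sub iB
    rw [hpt, integral_add i2 iAB, integral_sub i1 iB,
      integral_sub (integrable_const 1) iA, integral_const]
    simp [measure_univ]
    rw [ha, hb, hc]
  -- integrals of DD
  have hDAint : ∫ ω, DD y A (fun i => Y i ω) ∂μ = tA - (1 - a) := by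
    simp only [DD]
    rw [integral_sub iTA iFA, hFAint]
  have hDBint : ∫ ω, DD y B (fun i => Y i ω) ∂μ = tB - (1 - b) := by
    simp only [DD]
    rw [integral_sub iTB iFB, hFBint]
  have hDTint : ∫ ω, DD y A (fun i => Y i ω) * TT y B (fun i => Y i ω) ∂μ = tt - m1 := by
    have hpt : (fun ω => DD y A (fun i => Y i ω) * TT y B (fun i => Y i ω))
        = fun ω => TT y A (fun i => Y i ω) * TT y B (fun i => Y i ω)
            - FF y A (fun i => Y i ω) * TT y B (fun i => Y i ω) := by
      funext ω; simp only [DD]; ring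
    rw [hpt, integral_sub iTT iFT]
  have hFDint : ∫ ω, FF y A (fun i => Y i ω) * DD y B (fun i => Y i ω) ∂μ
      = m1 - (1 - a - b + c) := by
    have hpt : (fun ω => FF y A (fun i => Y i ω) * DD y B (fun i => Y i ω))
        = fun ω => FF y A (fun i => Y i ω) * TT y B (fun i => Y i ω)
            - FF y A (fun i => Y i ω) * FF y B (fun i => Y i ω) := by
      funext ω; simp only [DD]; ring
    rw [hpt, integral_sub iFT iFF, hFFint]
  -- association, applied twice
  have assoc1 : (tA - (1 - a)) * tB ≤ tt - m1 := by
    have h := hassoc (DD y A) (TT y B) (measurable_DD y A) (measurable_TT y B)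
      ⟨A.card + 1, DD_abs y A⟩ ⟨B.card, TT_abs y B⟩ (monotone_DD y A) (monotone_TT y B)
    rwa [hDAint, hDTint] at h
  have assoc2 : (1 - a) * (tB - (1 - b)) ≤ m1 - (1 - a - b + c) := by
    have h := hassoc (FF y A) (DD y B) (measurable_FF y A) (measurable_DD y B)
      ⟨1, FF_abs y A⟩ ⟨B.card + 1, DD_abs y B⟩ (monotone_FF y A) (monotone_DD y B)
    rwa [hFAint, hDBint, hFDint] at h
  -- the sum identity
  have htAsum : tA = ∑ j ∈ A, ∫ ω, xi y j (fun i => Y i ω) ∂μ := by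
    rw [htA]
    simp only [TT]
    rw [integral_finset_sum _ (fun j _ => ixi j)]
  have htBsum : tB = ∑ k ∈ B, ∫ ω, xi y k (fun i => Y i ω) ∂μ := by
    rw [htB]
    simp only [TT]
    rw [integral_finset_sum _ (fun k _ => ixi k)]
  have httsum : tt = ∑ j ∈ A, ∑ k ∈ B,
      ∫ ω, xi y j (fun i => Y i ω) * xi y k (fun i => Y i ω) ∂μ := by
    rw [htt]
    have hpt : (fun ω => TT y A (fun i => Y i ω) * TT y B (fun i => Y i ω))
        = fun ω => ∑ j ∈ A, ∑ k ∈ B,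
            xi y j (fun i => Y i ω) * xi y k (fun i => Y i ω) := by
      funext ω; simp only [TT]; rw [Finset.sum_mul_sum]
    rw [hpt, integral_finset_sum _ (fun j _ => integrable_finset_sum _ (fun k _ => ixx j k))]
    exact Finset.sum_congr rfl fun j _ => integral_finset_sum _ (fun k _ => ixx j k)
  -- relation between xi-integrals and chi-integrals
  have hxichi : ∀ j : Fin m, ∫ ω, xi y j (fun i => Y i ω) ∂μ
      = 1 - ∫ ω, chi y j (fun i => Y i ω) ∂μ := by
    intro j
    have hpt : (fun ω => xi y j (fun i => Y i ω))
        = fun ω => 1 - chi y j (fun i => Y i ω) := by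
      funext ω; rw [chi_eq]; ring
    rw [hpt, integral_sub (integrable_const 1) (ichi j), integral_const]
    simp [measure_univ]
  have hxxcc : ∀ j k : Fin m,
      ∫ ω, xi y j (fun i => Y i ω) * xi y k (fun i => Y i ω) ∂μ
      = 1 - (∫ ω, chi y j (fun i => Y i ω) ∂μ) - (∫ ω, chi y k (fun i => Y i ω) ∂μ)
        + ∫ ω, chi y j (fun i => Y i ω) * chi y k (fun i => Y i ω) ∂μ := by
    intro j k
    have hpt : (fun ω => xi y j (fun i => Y i ω) * xi y k (fun i => Y i ω))
        = fun ω => 1 - chi y j (fun i => Y i ω) - chi y k (fun i => Y i ω)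
            + chi y j (fun i => Y i ω) * chi y k (fun i => Y i ω) := by
      funext ω; rw [chi_eq, chi_eq]; ring
    have i1 : Integrable (fun ω => 1 - chi y j (fun i => Y i ω)) μ :=
      (integrable_const 1).sub (ichi j)
    have i2 : Integrable
        (fun ω => 1 - chi y j (fun i => Y i ω) - chi y k (fun i => Y i ω)) μ :=
      i1.sub (ichi k)
    rw [hpt, integral_add i2 (icc j k), integral_sub i1 (ichi k),
      integral_sub (integrable_const 1) (ichi j), integral_const]
    simp [measure_univ]
  have hsum : ∑ j ∈ A, ∑ k ∈ B,
      ((∫ ω, chi y j (fun i => Y i ω) * chi y k (fun i => Y i ω) ∂μ) -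
        (∫ ω, chi y j (fun i => Y i ω) ∂μ) * (∫ ω, chi y k (fun i => Y i ω) ∂μ))
      = tt - tA * tB := by
    have hterm : ∀ j ∈ A, ∀ k ∈ B,
        (∫ ω, chi y j (fun i => Y i ω) * chi y k (fun i => Y i ω) ∂μ) -
          (∫ ω, chi y j (fun i => Y i ω) ∂μ) * (∫ ω, chi y k (fun i => Y i ω) ∂μ)
        = (∫ ω, xi y j (fun i => Y i ω) * xi y k (fun i => Y i ω) ∂μ) -
          (∫ ω, xi y j (fun i => Y i ω) ∂μ) * (∫ ω, xi y k (fun i => Y i ω) ∂μ) := by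
      intro j _ k _
      rw [hxxcc j k, hxichi j, hxichi k]
      ring
    calc ∑ j ∈ A, ∑ k ∈ B,
          ((∫ ω, chi y j (fun i => Y i ω) * chi y k (fun i => Y i ω) ∂μ) -
            (∫ ω, chi y j (fun i => Y i ω) ∂μ) * (∫ ω, chi y k (fun i => Y i ω) ∂μ))
        = ∑ j ∈ A, ∑ k ∈ B,
          ((∫ ω, xi y j (fun i => Y i ω) * xi y k (fun i => Y i ω) ∂μ) -
            (∫ ω, xi y j (fun i => Y i ω) ∂μ) * (∫ ω, xi y k (fun i => Y i ω) ∂μ)) :=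
          Finset.sum_congr rfl fun j hj => Finset.sum_congr rfl fun k hk => hterm j hj k hk
      _ = (∑ j ∈ A, ∑ k ∈ B, ∫ ω, xi y j (fun i => Y i ω) * xi y k (fun i => Y i ω) ∂μ)
          - ∑ j ∈ A, ∑ k ∈ B,
            (∫ ω, xi y j (fun i => Y i ω) ∂μ) * (∫ ω, xi y k (fun i => Y i ω) ∂μ) := by
          rw [← Finset.sum_sub_distrib]
          exact Finset.sum_congr rfl fun j _ => Finset.sum_sub_distrib _ _
      _ = tt - tA * tB := by
          rw [← httsum, htAsum, htBsum, Finset.sum_mul_sum]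
  rw [hsum]
  nlinarith [assoc1, assoc2]

lemma measure_toReal_prodChi (hY : ∀ j, Measurable (Y j)) (y : Fin m → ℝ)
    (S : Finset (Fin m)) :
    (μ {ω | ∀ j ∈ S, Y j ω ≤ y j}).toReal = ∫ ω, prodChi y S (fun i => Y i ω) ∂μ := by
  have hs : MeasurableSet {ω | ∀ j ∈ S, Y j ω ≤ y j} := by
    have he : {ω | ∀ j ∈ S, Y j ω ≤ y j} = ⋂ j, ⋂ (_ : j ∈ S), {ω | Y j ω ≤ y j} := by
      ext ω; simp
    rw [he]
    exact MeasurableSet.iInter fun j => MeasurableSet.iInter fun _ =>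
      measurableSet_le (hY j) measurable_const
  have hpt : (fun ω => prodChi y S (fun i => Y i ω))
      = Set.indicator {ω | ∀ j ∈ S, Y j ω ≤ y j} (fun _ => (1:ℝ)) := by
    funext ω
    rw [prodChi_eq, Set.indicator_apply]
    simp only [Set.mem_setOf_eq]
  rw [hpt, integral_indicator_const (1:ℝ) hs]
  simp
  rfl

lemma measure_toReal_chi (hY : ∀ j, Measurable (Y j)) (y : Fin m → ℝ) (j : Fin m) :
    (μ {ω | Y j ω ≤ y j}).toReal = ∫ ω, chi y j (fun i => Y i ω) ∂μ := by
  have hs : MeasurableSet {ω | Y j ω ≤ y j} := measurableSet_le (hY j) measurable_const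
  have hpt : (fun ω => chi y j (fun i => Y i ω))
      = Set.indicator {ω | Y j ω ≤ y j} (fun _ => (1:ℝ)) := by
    funext ω
    rw [Set.indicator_apply]
    simp only [Set.mem_setOf_eq, chi]
  rw [hpt, integral_indicator_const (1:ℝ) hs]
  simp
  rfl

lemma measure_toReal_chi_mul (hY : ∀ j, Measurable (Y j)) (y : Fin m → ℝ) (j k : Fin m) :
    (μ {ω | Y j ω ≤ y j ∧ Y k ω ≤ y k}).toReal
      = ∫ ω, chi y j (fun i => Y i ω) * chi y k (fun i => Y i ω) ∂μ := by
  have hs : MeasurableSet {ω | Y j ω ≤ y j ∧ Y k ω ≤ y k} :=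
    (measurableSet_le (hY j) measurable_const).inter
      (measurableSet_le (hY k) measurable_const)
  have hpt : (fun ω => chi y j (fun i => Y i ω) * chi y k (fun i => Y i ω))
      = Set.indicator {ω | Y j ω ≤ y j ∧ Y k ω ≤ y k} (fun _ => (1:ℝ)) := by
    funext ω
    rw [Set.indicator_apply]
    simp only [Set.mem_setOf_eq]
    by_cases h1 : Y j ω ≤ y j <;> by_cases h2 : Y k ω ≤ y k <;> simp [chi, h1, h2]
  rw [hpt, integral_indicator_const (1:ℝ) hs]
  simp
  rfl

end Main
end AFKG

theorem assoc_FKG_subsets {Ω : Type*} [MeasurableSpace Ω] (μ : Measure Ω)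
    [IsProbabilityMeasure μ] {m : ℕ} (Y : Fin m → Ω → ℝ)
    (hY : ∀ j, Measurable (Y j)) (hassoc : IsAssociated μ Y)
    (y : Fin m → ℝ) (A B : Finset (Fin m)) :
    (μ {ω | ∀ j ∈ A ∪ B, Y j ω ≤ y j}).toReal -
      (μ {ω | ∀ j ∈ A, Y j ω ≤ y j}).toReal * (μ {ω | ∀ k ∈ B, Y k ω ≤ y k}).toReal ≤
    ∑ j ∈ A, ∑ k ∈ B,
      ((μ {ω | Y j ω ≤ y j ∧ Y k ω ≤ y k}).toReal -
        (μ {ω | Y j ω ≤ y j}).toReal * (μ {ω | Y k ω ≤ y k}).toReal) := by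
  simp only [AFKG.measure_toReal_prodChi hY y, AFKG.measure_toReal_chi hY y,
    AFKG.measure_toReal_chi_mul hY y, AFKG.prodChi_union]
  exact AFKG.main_ineq hY hassoc y A B
end

section
/- Let (Y₁,…,Yₘ) be an associated random vector on a probability space and let y₁,…,yₘ be real numbers. Then P{Yⱼ ≤ yⱼ for all 1 ≤ j ≤ m} − Π_{j=1}^m P{Yⱼ ≤ yⱼ} ≤ Σ_{1 ≤ j < k ≤ m} ( P{Yⱼ ≤ yⱼ and Yₖ ≤ yₖ} − P{Yⱼ ≤ yⱼ}·P{Yₖ ≤ yₖ} ). -/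
open MeasureTheory

section Aux

open Finset

variable {Ω : Type*} [MeasurableSpace Ω] {μ : Measure Ω} [IsProbabilityMeasure μ]
  {m : ℕ} {Y : Fin m → Ω → ℝ} {y : Fin m → ℝ}

/-- coordinate indicator function -/
noncomputable def chiF (y : Fin m → ℝ) (j : Fin m) (x : Fin m → ℝ) : ℝ :=
  if x j ≤ y j then 1 else 0

lemma chiF_nonneg (j : Fin m) (x : Fin m → ℝ) : 0 ≤ chiF y j x := by
  unfold chiF; split <;> norm_num

lemma chiF_le_one (j : Fin m) (x : Fin m → ℝ) : chiF y j x ≤ 1 := by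
  unfold chiF; split <;> norm_num

lemma chiF_antitone (j : Fin m) : Antitone (chiF y j) := by
  intro a b hab
  unfold chiF
  by_cases h1 : b j ≤ y j
  · simp [h1, (hab j).trans h1]
  · simp only [h1, if_false]
    split <;> norm_num

lemma chiF_measurable (j : Fin m) : Measurable (chiF y j) := by
  unfold chiF
  exact Measurable.ite (measurable_pi_apply j measurableSet_Iic) measurable_const
    measurable_const

/-- product of coordinate indicators over a finite index set -/
noncomputable def pcF (y : Fin m → ℝ) (S : Finset (Fin m)) (x : Fin m → ℝ) : ℝ :=
  ∏ j ∈ S, chiF y j x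

lemma pcF_nonneg (S : Finset (Fin m)) (x : Fin m → ℝ) : 0 ≤ pcF y S x :=
  Finset.prod_nonneg fun j _ => chiF_nonneg j x

lemma pcF_le_one (S : Finset (Fin m)) (x : Fin m → ℝ) : pcF y S x ≤ 1 :=
  Finset.prod_le_one (fun j _ => chiF_nonneg j x) (fun j _ => chiF_le_one j x)

lemma pcF_abs_le_one (S : Finset (Fin m)) (x : Fin m → ℝ) : |pcF y S x| ≤ 1 :=
  abs_le.2 ⟨by linarith [pcF_nonneg (y := y) S x], pcF_le_one S x⟩

lemma pcF_antitone (S : Finset (Fin m)) : Antitone (pcF y S) := by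
  intro a b hab
  exact Finset.prod_le_prod (fun j _ => chiF_nonneg j b) (fun j _ => chiF_antitone j hab)

lemma pcF_measurable (S : Finset (Fin m)) : Measurable (pcF y S) :=
  Finset.measurable_prod S fun j _ => chiF_measurable j

lemma pcF_apply (S : Finset (Fin m)) (x : Fin m → ℝ) :
    pcF y S x = if (∀ j ∈ S, x j ≤ y j) then 1 else 0 := by
  unfold pcF chiF
  by_cases h : ∀ j ∈ S, x j ≤ y j
  · rw [if_pos h]
    exact Finset.prod_eq_one fun j hj => if_pos (h j hj)
  · rw [if_neg h]
    push_neg at h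
    obtain ⟨j, hj, hx⟩ := h
    exact Finset.prod_eq_zero hj (if_neg (not_le.2 hx))

/-- integral of `h` composed with the vector `Y` -/
noncomputable def prRv (μ : Measure Ω) (Y : Fin m → Ω → ℝ) (y : Fin m → ℝ)
    (S : Finset (Fin m)) : ℝ :=
  ∫ ω, pcF y S (fun i => Y i ω) ∂μ

lemma integrable_comp (hY : ∀ j, Measurable (Y j)) {h : (Fin m → ℝ) → ℝ}
    (hm : Measurable h) (hb : ∀ x, |h x| ≤ 1) :
    Integrable (fun ω => h (fun i => Y i ω)) μ := by
  have hZ : Measurable (fun ω => (fun i => Y i ω)) := measurable_pi_lambda _ hY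
  exact (integrable_const (1 : ℝ)).mono' ((hm.comp hZ).aestronglyMeasurable)
    (ae_of_all _ fun ω => by simpa [Real.norm_eq_abs] using hb _)

/-- association applied to antitone functions -/
lemma cov_anti (hassoc : IsAssociated μ Y) (h₁ h₂ : (Fin m → ℝ) → ℝ)
    (m₁ : Measurable h₁) (m₂ : Measurable h₂)
    (b₁ : ∀ x, |h₁ x| ≤ 1) (b₂ : ∀ x, |h₂ x| ≤ 1)
    (a₁ : Antitone h₁) (a₂ : Antitone h₂) :
    (∫ ω, h₁ (fun i => Y i ω) ∂μ) * (∫ ω, h₂ (fun i => Y i ω) ∂μ) ≤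
      ∫ ω, h₁ (fun i => Y i ω) * h₂ (fun i => Y i ω) ∂μ := by
  have H := hassoc (fun x => -h₁ x) (fun x => -h₂ x) m₁.neg m₂.neg
    ⟨1, fun x => by simpa [abs_neg] using b₁ x⟩
    ⟨1, fun x => by simpa [abs_neg] using b₂ x⟩
    (fun a b hab => neg_le_neg (a₁ hab)) (fun a b hab => neg_le_neg (a₂ hab))
  simpa [integral_neg, neg_mul_neg] using H

lemma integral_ite_mem (p : Ω → Prop) [DecidablePred p]
    (hp : MeasurableSet {ω | p ω}) :
    ∫ ω, (if p ω then (1 : ℝ) else 0) ∂μ = (μ {ω | p ω}).toReal := by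
  rw [show (μ {ω | p ω}).toReal = μ.real {ω | p ω} from rfl, ← integral_indicator_one hp]
  congr 1
  ext ω
  by_cases h : p ω <;> simp [Set.indicator_apply, h]

lemma prRv_eq (hY : ∀ j, Measurable (Y j)) (S : Finset (Fin m)) :
    prRv μ Y y S = (μ {ω | ∀ j ∈ S, Y j ω ≤ y j}).toReal := by
  classical
  have hp : MeasurableSet {ω | ∀ j ∈ S, Y j ω ≤ y j} := by
    have : {ω | ∀ j ∈ S, Y j ω ≤ y j} = ⋂ j ∈ S, {ω | Y j ω ≤ y j} := by
      ext ω; simp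
    rw [this]
    exact S.measurableSet_biInter fun j _ => (hY j) measurableSet_Iic
  rw [← integral_ite_mem _ hp]
  unfold prRv
  congr 1
  ext ω
  rw [pcF_apply]

lemma prRv_empty : prRv μ Y y (∅ : Finset (Fin m)) = 1 := by
  unfold prRv
  simp [pcF]

lemma prRv_nonneg (hY : ∀ j, Measurable (Y j)) (S : Finset (Fin m)) :
    0 ≤ prRv μ Y y S :=
  integral_nonneg fun ω => pcF_nonneg S _

lemma prRv_le_one (hY : ∀ j, Measurable (Y j)) (S : Finset (Fin m)) :
    prRv μ Y y S ≤ 1 := by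
  unfold prRv
  calc ∫ ω, pcF y S (fun i => Y i ω) ∂μ ≤ ∫ _ω, (1 : ℝ) ∂μ :=
        integral_mono (integrable_comp hY (pcF_measurable S) (pcF_abs_le_one S))
          (integrable_const (1 : ℝ)) (fun ω => pcF_le_one S _)
    _ = 1 := by simp

lemma prRv_insert_cov (hY : ∀ j, Measurable (Y j)) (hassoc : IsAssociated μ Y)
    (k : Fin m) (S : Finset (Fin m)) (hk : k ∉ S) :
    prRv μ Y y S * prRv μ Y y {k} ≤ prRv μ Y y (insert k S) := by
  have H := cov_anti hassoc (pcF y S) (chiF y k) (pcF_measurable S) (chiF_measurable k)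
    (pcF_abs_le_one S) (fun x => abs_le.2 ⟨by linarith [chiF_nonneg (y := y) k x], chiF_le_one k x⟩)
    (pcF_antitone S) (chiF_antitone k)
  have h1 : prRv μ Y y {k} = ∫ ω, chiF y k (fun i => Y i ω) ∂μ := by
    unfold prRv pcF; simp
  have h2 : prRv μ Y y (insert k S) =
      ∫ ω, pcF y S (fun i => Y i ω) * chiF y k (fun i => Y i ω) ∂μ := by
    unfold prRv
    congr 1
    ext ω
    rw [pcF, Finset.prod_insert hk, mul_comm]
    rfl
  rw [h1, h2]
  exact H

/-- The key Lebowitz-type inequality, by induction on `S`: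
`Cov(∏_{j ∈ S ∪ {k}} χⱼ, χₖ) ≤ ∑_{j ∈ S} Cov(χⱼ, χₖ)`. -/
lemma key_lemma (hY : ∀ j, Measurable (Y j)) (hassoc : IsAssociated μ Y)
    (k : Fin m) (S : Finset (Fin m)) (hk : k ∉ S) :
    prRv μ Y y (insert k S) - prRv μ Y y S * prRv μ Y y {k} ≤
      ∑ j ∈ S, (prRv μ Y y {j, k} - prRv μ Y y {j} * prRv μ Y y {k}) := by
  classical
  induction S using Finset.induction_on with
  | empty =>
      simp [prRv_empty]
  | @insert j S hjS ih =>
      have hkS : k ∉ S := fun h => hk (Finset.mem_insert_of_mem h)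
      have hkj : k ≠ j := fun h => hk (h ▸ Finset.mem_insert_self j S)
      have IH := ih hkS
      set Z : Ω → (Fin m → ℝ) := fun ω => fun i => Y i ω with hZ
      set u : (Fin m → ℝ) → ℝ := pcF y S with hu
      set v : (Fin m → ℝ) → ℝ := chiF y j with hv
      set g : (Fin m → ℝ) → ℝ := chiF y k with hg
      -- basic bounds
      have hu0 : ∀ x, 0 ≤ u x := fun x => pcF_nonneg S x
      have hu1 : ∀ x, u x ≤ 1 := fun x => pcF_le_one S x
      have hv0 : ∀ x, 0 ≤ v x := fun x => chiF_nonneg j x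
      have hv1 : ∀ x, v x ≤ 1 := fun x => chiF_le_one j x
      have hg0 : ∀ x, 0 ≤ g x := fun x => chiF_nonneg k x
      have hg1 : ∀ x, g x ≤ 1 := fun x => chiF_le_one k x
      have hum : Measurable u := pcF_measurable S
      have hvm : Measurable v := chiF_measurable j
      have hgm : Measurable g := chiF_measurable k
      have hua : Antitone u := pcF_antitone S
      have hva : Antitone v := chiF_antitone j
      have hga : Antitone g := chiF_antitone k
      -- the auxiliary function w = u + v - u v = 1 - (1-u)(1-v)
      set w : (Fin m → ℝ) → ℝ := fun x => u x + v x - u x * v x with hw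
      have hw0 : ∀ x, 0 ≤ w x := by
        intro x; simp only [hw]
        nlinarith [mul_nonneg (hu0 x) (sub_nonneg.2 (hv1 x)), hv0 x]
      have hw1 : ∀ x, w x ≤ 1 := by
        intro x; simp only [hw]
        nlinarith [mul_nonneg (sub_nonneg.2 (hu1 x)) (sub_nonneg.2 (hv1 x))]
      have hwb : ∀ x, |w x| ≤ 1 := fun x => abs_le.2 ⟨by linarith [hw0 x], hw1 x⟩
      have hwm : Measurable w := (hum.add hvm).sub (hum.mul hvm)
      have hwa : Antitone w := by
        intro a b hab
        have h1 : u b ≤ u a := hua hab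
        have h2 : v b ≤ v a := hva hab
        simp only [hw]
        have hm : (1 - u a) * (1 - v a) ≤ (1 - u b) * (1 - v b) :=
          mul_le_mul (by linarith) (by linarith) (by linarith [hv1 a]) (by linarith [hu1 b])
        nlinarith [hm]
      -- covariance inequality for w and g
      have Hcov : (∫ ω, w (Z ω) ∂μ) * (∫ ω, g (Z ω) ∂μ) ≤ ∫ ω, w (Z ω) * g (Z ω) ∂μ :=
        cov_anti hassoc w g hwm hgm hwb
          (fun x => abs_le.2 ⟨by linarith [hg0 x], hg1 x⟩) hwa hga
      -- integrability facts
      have int_u : Integrable (fun ω => u (Z ω)) μ :=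
        integrable_comp hY hum (fun x => abs_le.2 ⟨by linarith [hu0 x], hu1 x⟩)
      have int_v : Integrable (fun ω => v (Z ω)) μ :=
        integrable_comp hY hvm (fun x => abs_le.2 ⟨by linarith [hv0 x], hv1 x⟩)
      have int_uv : Integrable (fun ω => u (Z ω) * v (Z ω)) μ :=
        integrable_comp hY (hum.mul hvm)
          (fun x => abs_le.2 ⟨by simp only [Pi.mul_apply]; linarith [mul_nonneg (hu0 x) (hv0 x)],
            mul_le_one₀ (hu1 x) (hv0 x) (hv1 x)⟩)
      have int_ug : Integrable (fun ω => u (Z ω) * g (Z ω)) μ :=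
        integrable_comp hY (hum.mul hgm)
          (fun x => abs_le.2 ⟨by simp only [Pi.mul_apply]; linarith [mul_nonneg (hu0 x) (hg0 x)],
            mul_le_one₀ (hu1 x) (hg0 x) (hg1 x)⟩)
      have int_vg : Integrable (fun ω => v (Z ω) * g (Z ω)) μ :=
        integrable_comp hY (hvm.mul hgm)
          (fun x => abs_le.2 ⟨by simp only [Pi.mul_apply]; linarith [mul_nonneg (hv0 x) (hg0 x)],
            mul_le_one₀ (hv1 x) (hg0 x) (hg1 x)⟩)
      have int_uvg : Integrable (fun ω => u (Z ω) * v (Z ω) * g (Z ω)) μ :=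
        integrable_comp hY ((hum.mul hvm).mul hgm)
          (fun x => abs_le.2 ⟨by simp only [Pi.mul_apply]; linarith [mul_nonneg (mul_nonneg (hu0 x) (hv0 x)) (hg0 x)],
            mul_le_one₀ (mul_le_one₀ (hu1 x) (hv0 x) (hv1 x)) (hg0 x) (hg1 x)⟩)
      -- linearity identities
      have lin1 : ∫ ω, w (Z ω) ∂μ =
          (∫ ω, u (Z ω) ∂μ) + (∫ ω, v (Z ω) ∂μ) - ∫ ω, u (Z ω) * v (Z ω) ∂μ := by
        have : (fun ω => w (Z ω)) = fun ω => u (Z ω) + v (Z ω) - u (Z ω) * v (Z ω) := by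
          funext ω; simp [hw]
        have int_add : Integrable (fun ω => u (Z ω) + v (Z ω)) μ := int_u.add int_v
        rw [this, integral_sub int_add int_uv, integral_add int_u int_v]
      have lin2 : ∫ ω, w (Z ω) * g (Z ω) ∂μ =
          (∫ ω, u (Z ω) * g (Z ω) ∂μ) + (∫ ω, v (Z ω) * g (Z ω) ∂μ) -
            ∫ ω, u (Z ω) * v (Z ω) * g (Z ω) ∂μ := by
        have : (fun ω => w (Z ω) * g (Z ω)) =
            fun ω => u (Z ω) * g (Z ω) + v (Z ω) * g (Z ω) - u (Z ω) * v (Z ω) * g (Z ω) := by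
          funext ω; simp only [hw]; ring
        have int_add : Integrable (fun ω => u (Z ω) * g (Z ω) + v (Z ω) * g (Z ω)) μ :=
          int_ug.add int_vg
        rw [this, integral_sub int_add int_uvg, integral_add int_ug int_vg]
      -- identify the prRv quantities with integrals
      have e_uv : prRv μ Y y (insert j S) = ∫ ω, u (Z ω) * v (Z ω) ∂μ := by
        unfold prRv
        congr 1; funext ω
        rw [pcF, Finset.prod_insert hjS, mul_comm]
        rfl
      have e_ug : prRv μ Y y (insert k S) = ∫ ω, u (Z ω) * g (Z ω) ∂μ := by
        unfold prRv
        congr 1; funext ω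
        rw [pcF, Finset.prod_insert hkS, mul_comm]
        rfl
      have e_uvg : prRv μ Y y (insert k (insert j S)) =
          ∫ ω, u (Z ω) * v (Z ω) * g (Z ω) ∂μ := by
        unfold prRv
        congr 1; funext ω
        rw [pcF, Finset.prod_insert hk, Finset.prod_insert hjS]
        show chiF y k (Z ω) * (chiF y j (Z ω) * pcF y S (Z ω)) = _
        ring
      have e_u : prRv μ Y y S = ∫ ω, u (Z ω) ∂μ := rfl
      have e_v : prRv μ Y y {j} = ∫ ω, v (Z ω) ∂μ := by
        unfold prRv; congr 1; funext ω; rw [pcF, Finset.prod_singleton]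
      have e_g : prRv μ Y y {k} = ∫ ω, g (Z ω) ∂μ := by
        unfold prRv; congr 1; funext ω; rw [pcF, Finset.prod_singleton]
      have e_vg : prRv μ Y y {j, k} = ∫ ω, v (Z ω) * g (Z ω) ∂μ := by
        unfold prRv
        congr 1; funext ω
        rw [pcF, Finset.prod_insert (by simp [hkj.symm] : j ∉ ({k} : Finset (Fin m))),
          Finset.prod_singleton]
      -- combine
      rw [Finset.sum_insert hjS, e_uvg, e_uv, e_g, e_vg, e_v]
      rw [e_ug, e_u, e_g] at IH
      rw [lin1, lin2] at Hcov
      linarith [IH, Hcov]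

end Aux

theorem assoc_FKG_full {Ω : Type*} [MeasurableSpace Ω] (μ : Measure Ω)
    [IsProbabilityMeasure μ] {m : ℕ} (Y : Fin m → Ω → ℝ)
    (hY : ∀ j, Measurable (Y j)) (hassoc : IsAssociated μ Y)
    (y : Fin m → ℝ) :
    (μ {ω | ∀ j, Y j ω ≤ y j}).toReal - ∏ j : Fin m, (μ {ω | Y j ω ≤ y j}).toReal ≤
    ∑ j : Fin m, ∑ k ∈ Finset.univ.filter (fun k => j < k),
      ((μ {ω | Y j ω ≤ y j ∧ Y k ω ≤ y k}).toReal -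
        (μ {ω | Y j ω ≤ y j}).toReal * (μ {ω | Y k ω ≤ y k}).toReal) := by
  classical
  set P : Finset (Fin m) → ℝ := prRv μ Y y with hP
  -- identify measures with P
  have hPuniv : (μ {ω | ∀ j, Y j ω ≤ y j}).toReal = P Finset.univ := by
    rw [hP, prRv_eq hY]; simp
  have hPsingle : ∀ j, (μ {ω | Y j ω ≤ y j}).toReal = P {j} := by
    intro j; rw [hP, prRv_eq hY]; simp
  have hPpair : ∀ j k : Fin m, j ≠ k →
      (μ {ω | Y j ω ≤ y j ∧ Y k ω ≤ y k}).toReal = P {j, k} := by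
    intro j k hjk
    rw [hP, prRv_eq hY]
    congr 2
    ext ω
    simp [Finset.mem_insert]
  -- telescoping setup
  set A : ℕ → Finset (Fin m) := fun n => Finset.univ.filter (fun j => (j : ℕ) < n) with hA
  set B : ℕ → Finset (Fin m) := fun n => Finset.univ.filter (fun j => n ≤ (j : ℕ)) with hB
  set F : ℕ → ℝ := fun n => P (A n) * ∏ j ∈ B n, P {j} with hF
  have hF0 : F 0 = ∏ j : Fin m, P {j} := by
    have hA0 : A 0 = ∅ := by ext j; simp [hA]
    have hB0 : B 0 = Finset.univ := by ext j; simp [hB]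
    simp [hF, hA0, hB0, hP, prRv_empty]
  have hFm : F m = P Finset.univ := by
    have hAm : A m = Finset.univ := by ext j; simp [hA, j.isLt]
    have hBm : B m = ∅ := by ext j; simp [hB, Nat.not_le.2 j.isLt]
    simp [hF, hAm, hBm]
  -- per-step bound
  have hstep : ∀ k : Fin m,
      F ((k : ℕ) + 1) - F (k : ℕ) ≤
        ∑ j ∈ Finset.univ.filter (fun j => j < k), (P {j, k} - P {j} * P {k}) := by
    intro k
    have hins : A ((k : ℕ) + 1) = insert k (A (k : ℕ)) := by
      ext j
      simp only [hA, Finset.mem_filter, Finset.mem_univ, true_and, Finset.mem_insert,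
        Fin.ext_iff]
      omega
    have hkA : k ∉ A (k : ℕ) := by simp [hA]
    have hins2 : B (k : ℕ) = insert k (B ((k : ℕ) + 1)) := by
      ext j
      simp only [hB, Finset.mem_filter, Finset.mem_univ, true_and, Finset.mem_insert,
        Fin.ext_iff]
      omega
    have hkB : k ∉ B ((k : ℕ) + 1) := by simp [hB]
    have hQ0 : 0 ≤ ∏ j ∈ B ((k : ℕ) + 1), P {j} :=
      Finset.prod_nonneg fun j _ => prRv_nonneg hY {j}
    have hQ1 : (∏ j ∈ B ((k : ℕ) + 1), P {j}) ≤ 1 :=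
      Finset.prod_le_one (fun j _ => prRv_nonneg hY {j}) (fun j _ => prRv_le_one hY {j})
    have hbr : 0 ≤ P (insert k (A (k : ℕ))) - P (A (k : ℕ)) * P {k} :=
      sub_nonneg.2 (prRv_insert_cov hY hassoc k _ hkA)
    have hkey := key_lemma (μ := μ) (Y := Y) (y := y) hY hassoc k (A (k : ℕ)) hkA
    have hfilter : A (k : ℕ) = Finset.univ.filter (fun j => j < k) := by
      ext j
      simp only [hA, Finset.mem_filter, Finset.mem_univ, true_and, Fin.lt_def]
    calc F ((k : ℕ) + 1) - F (k : ℕ)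
        = (P (insert k (A (k : ℕ))) - P (A (k : ℕ)) * P {k}) *
            ∏ j ∈ B ((k : ℕ) + 1), P {j} := by
          rw [hF]
          simp only [hins, hins2, Finset.prod_insert hkB]
          ring
      _ ≤ (P (insert k (A (k : ℕ))) - P (A (k : ℕ)) * P {k}) * 1 := by
          exact mul_le_mul_of_nonneg_left hQ1 hbr
      _ = P (insert k (A (k : ℕ))) - P (A (k : ℕ)) * P {k} := by ring
      _ ≤ ∑ j ∈ A (k : ℕ), (P {j, k} - P {j} * P {k}) := hkey
      _ = ∑ j ∈ Finset.univ.filter (fun j => j < k), (P {j, k} - P {j} * P {k}) := by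
          rw [hfilter]
  -- telescoping
  have tele : P Finset.univ - ∏ j : Fin m, P {j} =
      ∑ k : Fin m, (F ((k : ℕ) + 1) - F (k : ℕ)) := by
    rw [Fin.sum_univ_eq_sum_range (fun i => F (i + 1) - F i) m, Finset.sum_range_sub]
    rw [hF0, hFm]
  -- final summation bound and reindexing
  have main : P Finset.univ - ∏ j : Fin m, P {j} ≤
      ∑ k : Fin m, ∑ j ∈ Finset.univ.filter (fun j => j < k), (P {j, k} - P {j} * P {k}) := by
    rw [tele]
    exact Finset.sum_le_sum fun k _ => hstep k
  have swap : ∑ k : Fin m, ∑ j ∈ Finset.univ.filter (fun j => j < k),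
        (P {j, k} - P {j} * P {k}) =
      ∑ j : Fin m, ∑ k ∈ Finset.univ.filter (fun k => j < k),
        (P {j, k} - P {j} * P {k}) := by
    simp only [Finset.sum_filter]
    exact Finset.sum_comm
  rw [hPuniv]
  have hprod : ∏ j : Fin m, (μ {ω | Y j ω ≤ y j}).toReal = ∏ j : Fin m, P {j} :=
    Finset.prod_congr rfl fun j _ => hPsingle j
  have hrhs : ∑ j : Fin m, ∑ k ∈ Finset.univ.filter (fun k => j < k),
      ((μ {ω | Y j ω ≤ y j ∧ Y k ω ≤ y k}).toReal -
        (μ {ω | Y j ω ≤ y j}).toReal * (μ {ω | Y k ω ≤ y k}).toReal) =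
      ∑ j : Fin m, ∑ k ∈ Finset.univ.filter (fun k => j < k),
        (P {j, k} - P {j} * P {k}) := by
    refine Finset.sum_congr rfl fun j _ => Finset.sum_congr rfl fun k hk => ?_
    have hjk : j < k := (Finset.mem_filter.1 hk).2
    rw [hPpair j k (ne_of_lt hjk), hPsingle j, hPsingle k]
  rw [hprod, hrhs, ← swap]
  exact main
end

section
/- Fix λ > 0 and ε ∈ (0, 2/3). Let F : ℝ → ℝ be a continuously differentiable, strictly increasing cumulative distribution function (F(s) → 0 as s → −∞ and F(s) → 1 as s → +∞) whose derivative F′ is everywhere positive, and suppose there exist constants C₁ > 0 and C₂ > 0 such that F′(s) ≤ exp(−(2/3)s^{3/2}) for all s ≥ C₁ and 1 − F(s) ≥ exp(−(2/3 + ε)s^{3/2}) for all s ≥ C₂. Let T : (0,1) → ℝ denote the inverse function of s ↦ 1 − F(s). Then there exist a positive integer N₀ and a positive constant C, both depending on λ and ε, such that for all real z ≥ N₀, T(λ/z) − T(λ/(z−1)) ≥ C · z^{−(2+6ε)/(2+3ε)}. -/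
open Filter Real

theorem tracyWidom_inverse_tail_diff
    (lam ε : ℝ) (hlam : 0 < lam) (hε : ε ∈ Set.Ioo (0 : ℝ) (2/3))
    (F : ℝ → ℝ) (hF : ContDiff ℝ 1 F) (hFmono : StrictMono F)
    (hF0 : Tendsto F atBot (nhds 0)) (hF1 : Tendsto F atTop (nhds 1))
    (hF' : ∀ s, 0 < deriv F s)
    (C₁ : ℝ) (hC₁ : 0 < C₁)
    (hdens : ∀ s, C₁ ≤ s → deriv F s ≤ Real.exp (-(2/3) * s ^ (3/2 : ℝ)))
    (C₂ : ℝ) (hC₂ : 0 < C₂)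
    (htail : ∀ s, C₂ ≤ s → Real.exp (-(2/3 + ε) * s ^ (3/2 : ℝ)) ≤ 1 - F s)
    (T : ℝ → ℝ) (hT : ∀ u ∈ Set.Ioo (0 : ℝ) 1, 1 - F (T u) = u) :
    ∃ N₀ : ℕ, 0 < N₀ ∧ ∃ C : ℝ, 0 < C ∧ ∀ z : ℝ, (N₀ : ℝ) ≤ z →
      C * z ^ (-(2 + 6 * ε) / (2 + 3 * ε)) ≤ T (lam / z) - T (lam / (z - 1)) := by
  obtain ⟨hε0, hε23⟩ := hε
  set α : ℝ := 2/3 + ε with hαdef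
  have hα0 : 0 < α := by simp only [hαdef]; linarith
  have h2 : (0:ℝ) < 2 + 3*ε := by linarith
  set β : ℝ := 2/(2+3*ε) with hβdef
  have hβ0 : 0 < β := by positivity
  have hβ1 : β < 1 := by
    rw [hβdef, div_lt_one h2]; linarith
  set M : ℝ := max C₁ C₂ with hMdef
  have hM0 : 0 < M := lt_of_lt_of_le hC₁ (le_max_left _ _)
  have hexp1 : (1:ℝ) ≤ Real.exp (α * M ^ (3/2:ℝ)) := Real.one_le_exp (by positivity)
  refine ⟨⌈lam + lam * Real.exp (α * M ^ (3/2:ℝ))⌉₊ + 2, by positivity,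
    lam ^ (1 - β), Real.rpow_pos_of_pos hlam _, ?_⟩
  intro z hz
  have hzK : lam + lam * Real.exp (α * M ^ (3/2:ℝ)) + 2 ≤ z := by
    have h1 := Nat.le_ceil (lam + lam * Real.exp (α * M ^ (3/2:ℝ)))
    push_cast at hz
    linarith
  have hz1lam : lam < z - 1 := by nlinarith
  have hz1pos : (0:ℝ) < z - 1 := hlam.trans hz1lam
  have hz0 : (0:ℝ) < z := by linarith
  have hu1 : lam / (z-1) ∈ Set.Ioo (0:ℝ) 1 := ⟨by positivity, (div_lt_one hz1pos).2 hz1lam⟩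
  have hult : lam / z < lam / (z-1) := by
    apply div_lt_div_of_pos_left hlam hz1pos; linarith
  have hu2 : lam / z ∈ Set.Ioo (0:ℝ) 1 := ⟨by positivity, hult.trans hu1.2⟩
  set a := T (lam/(z-1)) with hadef
  set b := T (lam/z) with hbdef
  have hFa : 1 - F a = lam/(z-1) := hT _ hu1
  have hFb : 1 - F b = lam/z := hT _ hu2
  have hab : a < b := hFmono.lt_iff_lt.mp (by linarith)
  set L : ℝ := Real.log ((z-1)/lam) with hLdef
  have hzl1 : 1 < (z-1)/lam := (one_lt_div hlam).2 hz1lam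
  have hL0 : 0 < L := Real.log_pos hzl1
  set s₀ : ℝ := (L/α) ^ (2/3:ℝ) with hs₀def
  have hLα : 0 ≤ L/α := by positivity
  have hLM : α * M ^ (3/2:ℝ) ≤ L := by
    have h1 : Real.exp (α * M ^ (3/2:ℝ)) ≤ (z-1)/lam := by
      rw [le_div_iff₀ hlam]
      nlinarith
    calc α * M ^ (3/2:ℝ) = Real.log (Real.exp (α * M ^ (3/2:ℝ))) := (Real.log_exp _).symm
      _ ≤ L := Real.log_le_log (by positivity) h1
  have hs₀M : M ≤ s₀ := by
    have h1 : M ^ (3/2:ℝ) ≤ L/α := (le_div_iff₀' hα0).2 hLM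
    have h2' : (M ^ (3/2:ℝ)) ^ (2/3:ℝ) ≤ s₀ :=
      Real.rpow_le_rpow (by positivity) h1 (by norm_num)
    calc M = (M ^ (3/2:ℝ)) ^ (2/3:ℝ) := by
            rw [← Real.rpow_mul hM0.le]; norm_num
      _ ≤ s₀ := h2'
  have hs₀C₁ : C₁ ≤ s₀ := (le_max_left _ _).trans hs₀M
  have hs₀C₂ : C₂ ≤ s₀ := (le_max_right _ _).trans hs₀M
  have hs₀0 : 0 ≤ s₀ := (hC₁.le.trans hs₀C₁)
  have hs₀pow : s₀ ^ (3/2:ℝ) = L/α := by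
    rw [hs₀def, ← Real.rpow_mul hLα]; norm_num
  have hexps₀ : Real.exp (-α * s₀ ^ (3/2:ℝ)) = lam/(z-1) := by
    rw [hs₀pow]
    have h3 : -α * (L/α) = -L := by field_simp
    rw [h3, hLdef, Real.exp_neg, Real.exp_log (by positivity), inv_div]
  have hs₀a : s₀ ≤ a := by
    have h1 := htail s₀ hs₀C₂
    rw [show (-(2/3+ε) : ℝ) = -α by rw [hαdef]] at h1
    rw [hexps₀] at h1
    exact hFmono.le_iff_le.mp (by linarith)
  have hFd : Differentiable ℝ F := hF.differentiable (by norm_num)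
  obtain ⟨ξ, hξmem, hξ⟩ := exists_hasDerivAt_eq_slope F (deriv F) hab
    (hF.continuous.continuousOn)
    (fun x _ => (hFd x).hasDerivAt)
  have hξs₀ : s₀ ≤ ξ := hs₀a.trans hξmem.1.le
  have hderivξ : deriv F ξ ≤ Real.exp (-(2/3) * s₀ ^ (3/2:ℝ)) := by
    calc deriv F ξ ≤ Real.exp (-(2/3) * ξ ^ (3/2:ℝ)) := hdens ξ (hs₀C₁.trans hξs₀)
      _ ≤ Real.exp (-(2/3) * s₀ ^ (3/2:ℝ)) := by
          apply Real.exp_le_exp.2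
          have := Real.rpow_le_rpow hs₀0 hξs₀ (by norm_num : (0:ℝ) ≤ 3/2)
          linarith
  have hFba : F b - F a = lam/((z-1)*z) := by
    have : F b - F a = lam/(z-1) - lam/z := by linarith
    rw [this]; field_simp; ring
  have hFbapos : 0 < F b - F a := by rw [hFba]; positivity
  have hba : b - a = (F b - F a) / deriv F ξ := by
    rw [hξ, div_div_eq_mul_div, mul_comm, mul_div_assoc, div_self hFbapos.ne', mul_one]
  have hE : Real.exp (-(2/3) * s₀ ^ (3/2:ℝ)) = ((z-1)/lam) ^ (-β) := by
    rw [hs₀pow, Real.rpow_def_of_pos (by positivity), hLdef]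
    congr 1
    rw [hβdef, hαdef]
    field_simp
  have hexpne : (0:ℝ) < Real.exp (-(2/3) * s₀ ^ (3/2:ℝ)) := Real.exp_pos _
  have hstep1 : lam/((z-1)*z) / Real.exp (-(2/3) * s₀ ^ (3/2:ℝ)) ≤ b - a := by
    rw [hba, hFba]
    apply div_le_div_of_nonneg_left (by positivity) (hF' ξ) hderivξ
  have hkey : lam/((z-1)*z) / Real.exp (-(2/3) * s₀ ^ (3/2:ℝ))
      = lam ^ (1-β) * ((z-1) ^ (β-1) * z⁻¹) := by
    rw [hE, Real.rpow_neg (by positivity), div_inv_eq_mul,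
      Real.div_rpow hz1pos.le hlam.le,
      Real.rpow_sub hlam, Real.rpow_sub hz1pos, Real.rpow_one, Real.rpow_one]
    field_simp
  have hz1z : (z-1 : ℝ) ^ (β-1) ≥ z ^ (β-1) :=
    Real.rpow_le_rpow_of_nonpos hz1pos (by linarith) (by linarith)
  have hzz : z ^ (β-1) * z⁻¹ = z ^ (β-2) := by
    rw [← Real.rpow_neg_one z, ← Real.rpow_add hz0]
    congr 1; ring
  have hexpeq : -(2 + 6*ε) / (2 + 3*ε) = β - 2 := by
    rw [hβdef]; field_simp; ring
  rw [hexpeq]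
  calc lam ^ (1-β) * z ^ (β-2) = lam ^ (1-β) * (z ^ (β-1) * z⁻¹) := by rw [hzz]
    _ ≤ lam ^ (1-β) * ((z-1) ^ (β-1) * z⁻¹) := by
        apply mul_le_mul_of_nonneg_left _ (Real.rpow_pos_of_pos hlam _).le
        apply mul_le_mul_of_nonneg_right hz1z (by positivity)
    _ = lam/((z-1)*z) / Real.exp (-(2/3) * s₀ ^ (3/2:ℝ)) := hkey.symm
    _ ≤ b - a := hstep1
end

section
/- There exists a constant c₁ > 0 such that for all θ ≥ 1, ∫₀^∞ exp(2θy − (4/3)y^{3/2}) dy ≤ c₁ θ² exp((2/3)θ³). -/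
open MeasureTheory Real

theorem steepest_descent_bound_1 :
    ∃ c₁ : ℝ, 0 < c₁ ∧ ∀ θ : ℝ, 1 ≤ θ →
      ∫ y in Set.Ici (0 : ℝ), Real.exp (2 * θ * y - (4/3) * y ^ (3/2 : ℝ)) ≤
        c₁ * θ ^ 2 * Real.exp ((2/3) * θ ^ 3) := by
  refine ⟨10, by norm_num, fun θ hθ => ?_⟩
  have hθ0 : (0:ℝ) < θ := lt_of_lt_of_le one_pos hθ
  set f : ℝ → ℝ := fun y => Real.exp (2 * θ * y - (4/3) * y ^ (3/2 : ℝ)) with hf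
  set a : ℝ := 9 * θ ^ 2 with ha
  have ha0 : (0:ℝ) ≤ a := by positivity
  have hrpow : ∀ y : ℝ, 0 ≤ y → y ^ (3/2 : ℝ) = (Real.sqrt y) ^ 3 := by
    intro y hy
    rw [Real.sqrt_eq_rpow, ← Real.rpow_natCast (y ^ (1/2 : ℝ)) 3, ← Real.rpow_mul hy]
    norm_num
  -- global max bound
  have keyA : ∀ y : ℝ, 0 ≤ y → f y ≤ Real.exp ((2/3) * θ ^ 3) := by
    intro y hy
    apply Real.exp_le_exp.mpr
    have ht0 : 0 ≤ Real.sqrt y := Real.sqrt_nonneg y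
    have ht2 : Real.sqrt y ^ 2 = y := Real.sq_sqrt hy
    rw [hrpow y hy]
    nlinarith [mul_nonneg (sq_nonneg (Real.sqrt y - θ))
      (by positivity : (0:ℝ) ≤ 2 * Real.sqrt y + θ)]
  -- tail bound
  have keyB : ∀ y : ℝ, a ≤ y → f y ≤ Real.exp (-y) := by
    intro y hy
    have hy0 : 0 ≤ y := le_trans ha0 hy
    apply Real.exp_le_exp.mpr
    have ht0 : 0 ≤ Real.sqrt y := Real.sqrt_nonneg y
    have ht2 : Real.sqrt y ^ 2 = y := Real.sq_sqrt hy0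
    have ht3 : 3 * θ ≤ Real.sqrt y := by nlinarith
    rw [hrpow y hy0]
    nlinarith [mul_nonneg (mul_nonneg ht0 ht0) ht0]
  have hcont : Continuous f := by
    apply Real.continuous_exp.comp
    exact (continuous_const.mul continuous_id).sub
      (continuous_const.mul (Real.continuous_rpow_const (by norm_num)))
  -- integrability of f on Ici 0
  have hgint : IntegrableOn (fun y => Real.exp ((2/3) * θ ^ 3 + a) * Real.exp (-y))
      (Set.Ici 0) := by
    have h0 : IntegrableOn (fun y : ℝ => Real.exp (-y)) (Set.Ici 0) := by
      rw [integrableOn_Ici_iff_integrableOn_Ioi]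
      simpa using exp_neg_integrableOn_Ioi 0 (one_pos (α := ℝ))
    exact h0.const_mul _
  have hint : IntegrableOn f (Set.Ici 0) := by
    apply hgint.mono' (hcont.aestronglyMeasurable.restrict)
    rw [ae_restrict_iff' measurableSet_Ici]
    filter_upwards with y hy
    rw [Real.norm_eq_abs, abs_of_pos (Real.exp_pos _)]
    rcases le_or_gt y a with h | h
    · calc f y ≤ Real.exp ((2/3) * θ ^ 3) := keyA y hy
        _ ≤ Real.exp ((2/3) * θ ^ 3 + a) * Real.exp (-y) := by
            rw [← Real.exp_add]
            apply Real.exp_le_exp.mpr; linarith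
    · calc f y ≤ Real.exp (-y) := keyB y h.le
        _ ≤ Real.exp ((2/3) * θ ^ 3 + a) * Real.exp (-y) := by
            nlinarith [Real.one_le_exp (by positivity : (0:ℝ) ≤ (2/3) * θ ^ 3 + a),
              Real.exp_pos (-y)]
  have hexpint : IntegrableOn (fun y : ℝ => Real.exp (-y)) (Set.Ici a) := by
    rw [integrableOn_Ici_iff_integrableOn_Ioi]
    have := exp_neg_integrableOn_Ioi a (one_pos (α := ℝ))
    simpa using this
  -- split the integral
  have hsplit : Set.Ici (0:ℝ) = Set.Ico 0 a ∪ Set.Ici a := (Set.Ico_union_Ici_eq_Ici ha0).symm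
  have hdisj : Disjoint (Set.Ico (0:ℝ) a) (Set.Ici a) :=
    Set.disjoint_left.mpr (fun x hx hx' => absurd hx.2 (not_lt.mpr hx'))
  have hI1 : ∫ y in Set.Ico 0 a, f y ≤ a * Real.exp ((2/3) * θ ^ 3) := by
    calc ∫ y in Set.Ico 0 a, f y
        ≤ ∫ _ in Set.Ico 0 a, Real.exp ((2/3) * θ ^ 3) := by
          apply setIntegral_mono_on (hint.mono_set (by rw [hsplit]; exact Set.subset_union_left))
            (integrableOn_const measure_Ico_lt_top.ne) measurableSet_Ico
          exact fun y hy => keyA y hy.1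
      _ = a * Real.exp ((2/3) * θ ^ 3) := by
          rw [setIntegral_const, Real.volume_real_Ico_of_le ha0, smul_eq_mul, sub_zero]
  have hI2 : ∫ y in Set.Ici a, f y ≤ 1 := by
    calc ∫ y in Set.Ici a, f y
        ≤ ∫ y in Set.Ici a, Real.exp (-y) := by
          apply setIntegral_mono_on (hint.mono_set (by rw [hsplit]; exact Set.subset_union_right))
            hexpint measurableSet_Ici
          exact fun y hy => keyB y hy
      _ = Real.exp (-a) := by
          rw [integral_Ici_eq_integral_Ioi, integral_exp_neg_Ioi]
      _ ≤ 1 := Real.exp_le_one_iff.mpr (by linarith)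
  have hE : (1:ℝ) ≤ Real.exp ((2/3) * θ ^ 3) := Real.one_le_exp (by positivity)
  have hθ2 : (1:ℝ) ≤ θ ^ 2 := by nlinarith
  calc ∫ y in Set.Ici (0:ℝ), f y
      = (∫ y in Set.Ico 0 a, f y) + ∫ y in Set.Ici a, f y := by
        rw [hsplit, setIntegral_union hdisj measurableSet_Ici
          (hint.mono_set (by rw [hsplit]; exact Set.subset_union_left))
          (hint.mono_set (by rw [hsplit]; exact Set.subset_union_right))]
    _ ≤ a * Real.exp ((2/3) * θ ^ 3) + 1 := add_le_add hI1 hI2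
    _ ≤ 10 * θ ^ 2 * Real.exp ((2/3) * θ ^ 3) := by nlinarith
end

section
/- There exists a constant c₄ > 0 such that for all θ ≥ 1, ∫_{ℝ² \ (−∞,0]²} exp(−(x−y)²/2 − 2θ(x+y)) dx dy ≤ c₄ θ exp(2θ²). -/
open MeasureTheory Real Set

private lemma sdb4_int_y (θ x : ℝ) :
    Integrable (fun y => Real.exp (-(x - y) ^ 2 / 2 - 2 * θ * (x + y))) := by
  have h : Integrable (fun y => Real.exp (-(2⁻¹ : ℝ) * (y - (x - 2 * θ)) ^ 2) *
      Real.exp (2 * θ ^ 2 - 4 * θ * x)) :=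
    ((integrable_exp_neg_mul_sq (by norm_num : (0:ℝ) < 2⁻¹)).comp_sub_right _).mul_const _
  refine h.congr (Filter.Eventually.of_forall fun y => ?_)
  simp only [← Real.exp_add]
  congr 1
  ring

private lemma sdb4_val_y (θ x : ℝ) :
    ∫ y, Real.exp (-(x - y) ^ 2 / 2 - 2 * θ * (x + y)) =
      Real.sqrt (2 * π) * Real.exp (2 * θ ^ 2 - 4 * θ * x) := by
  have h1 : ∀ y : ℝ, Real.exp (-(x - y) ^ 2 / 2 - 2 * θ * (x + y)) =
      Real.exp (-(2⁻¹ : ℝ) * (y - (x - 2 * θ)) ^ 2) * Real.exp (2 * θ ^ 2 - 4 * θ * x) := by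
    intro y; rw [← Real.exp_add]; congr 1; ring
  simp_rw [h1]
  rw [integral_mul_const]
  congr 1
  rw [integral_sub_right_eq_self (fun y => Real.exp (-(2⁻¹ : ℝ) * y ^ 2)) (x - 2 * θ),
    integral_gaussian]
  rw [div_inv_eq_mul, mul_comm]

private lemma sdb4_norm_val (θ x : ℝ) :
    (∫ y, ‖Real.exp (-(x - y) ^ 2 / 2 - 2 * θ * (x + y))‖) =
      (Real.sqrt (2 * π) * Real.exp (2 * θ ^ 2)) * Real.exp (-(4 * θ) * x) := by
  simp_rw [Real.norm_eq_abs, abs_of_pos (Real.exp_pos _)]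
  rw [sdb4_val_y θ x, show 2 * θ ^ 2 - 4 * θ * x = 2 * θ ^ 2 + -(4 * θ) * x by ring,
    Real.exp_add, mul_assoc]

private lemma sdb4_intA {θ : ℝ} (hθ : 0 < θ) :
    IntegrableOn (fun p : ℝ × ℝ => Real.exp (-(p.1 - p.2) ^ 2 / 2 - 2 * θ * (p.1 + p.2)))
      (Ioi (0:ℝ) ×ˢ (univ : Set ℝ)) := by
  rw [IntegrableOn, Measure.volume_eq_prod, ← Measure.prod_restrict, Measure.restrict_univ]
  refine (integrable_prod_iff ?_).2 ⟨?_, ?_⟩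
  · exact Continuous.aestronglyMeasurable (by fun_prop)
  · exact Filter.Eventually.of_forall fun x => sdb4_int_y θ x
  · refine (((exp_neg_integrableOn_Ioi 0 (by positivity : (0:ℝ) < 4 * θ)).const_mul
      (Real.sqrt (2 * π) * Real.exp (2 * θ ^ 2))).congr ?_)
    exact Filter.Eventually.of_forall fun x => (sdb4_norm_val θ x).symm

private lemma sdb4_valA {θ : ℝ} (hθ : 0 < θ) :
    ∫ p in Ioi (0:ℝ) ×ˢ (univ : Set ℝ),
        Real.exp (-(p.1 - p.2) ^ 2 / 2 - 2 * θ * (p.1 + p.2)) =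
      Real.sqrt (2 * π) * Real.exp (2 * θ ^ 2) * (4 * θ)⁻¹ := by
  have hA := sdb4_intA hθ
  rw [IntegrableOn, Measure.volume_eq_prod] at hA
  rw [Measure.volume_eq_prod, setIntegral_prod _ hA]
  simp_rw [Measure.restrict_univ, sdb4_val_y,
    show ∀ x : ℝ, Real.sqrt (2 * π) * Real.exp (2 * θ ^ 2 - 4 * θ * x) =
      (Real.sqrt (2 * π) * Real.exp (2 * θ ^ 2)) * Real.exp (-(4 * θ * x)) from fun x => by
        rw [show 2 * θ ^ 2 - 4 * θ * x = 2 * θ ^ 2 + -(4 * θ * x) by ring, Real.exp_add]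
        ring,
    integral_const_mul]
  have h3 := integral_comp_mul_left_Ioi (fun u => Real.exp (-u)) 0
    (show (0:ℝ) < 4 * θ by positivity)
  rw [mul_zero] at h3
  have h3' : ∫ x in Ioi (0:ℝ), Real.exp (-(4 * θ * x)) = (4 * θ)⁻¹ := by
    simpa [integral_exp_neg_Ioi_zero, integral_exp_Iic_zero, smul_eq_mul] using h3
  rw [h3']

theorem steepest_descent_bound_4 :
    ∃ c₄ : ℝ, 0 < c₄ ∧ ∀ θ : ℝ, 1 ≤ θ →
      ∫ p in ((Set.Iic (0 : ℝ)) ×ˢ (Set.Iic (0 : ℝ)))ᶜ,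
          Real.exp (-(p.1 - p.2) ^ 2 / 2 - 2 * θ * (p.1 + p.2)) ≤
        c₄ * θ * Real.exp (2 * θ ^ 2) := by
  refine ⟨3, by norm_num, fun θ hθ => ?_⟩
  have hθ0 : (0:ℝ) < θ := lt_of_lt_of_le one_pos hθ
  have hA : IntegrableOn (fun p : ℝ × ℝ => Real.exp (-(p.1 - p.2) ^ 2 / 2 - 2 * θ * (p.1 + p.2)))
      (Ioi (0:ℝ) ×ˢ (univ : Set ℝ)) := sdb4_intA hθ0
  have hmp : MeasurePreserving (Prod.swap : ℝ × ℝ → ℝ × ℝ) volume volume := by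
    rw [Measure.volume_eq_prod]
    exact Measure.measurePreserving_swap
  have hemb : MeasurableEmbedding (Prod.swap : ℝ × ℝ → ℝ × ℝ) :=
    (MeasurableEquiv.prodComm (α := ℝ) (β := ℝ)).measurableEmbedding
  have hpre : (Prod.swap : ℝ × ℝ → ℝ × ℝ) ⁻¹' ((univ : Set ℝ) ×ˢ Ioi (0:ℝ)) =
      Ioi (0:ℝ) ×ˢ (univ : Set ℝ) := by
    ext p; simp
  have hsym : ((fun p : ℝ × ℝ => Real.exp (-(p.1 - p.2) ^ 2 / 2 - 2 * θ * (p.1 + p.2)))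
      ∘ Prod.swap) = fun p : ℝ × ℝ => Real.exp (-(p.1 - p.2) ^ 2 / 2 - 2 * θ * (p.1 + p.2)) := by
    funext p
    simp only [Function.comp_apply, Prod.swap]
    congr 1
    ring
  have hB : IntegrableOn (fun p : ℝ × ℝ => Real.exp (-(p.1 - p.2) ^ 2 / 2 - 2 * θ * (p.1 + p.2)))
      ((univ : Set ℝ) ×ˢ Ioi (0:ℝ)) := by
    rw [← hmp.integrableOn_comp_preimage hemb, hpre, hsym]
    exact hA
  have hval : ∫ p in Ioi (0:ℝ) ×ˢ (univ : Set ℝ),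
      Real.exp (-(p.1 - p.2) ^ 2 / 2 - 2 * θ * (p.1 + p.2)) =
      Real.sqrt (2 * π) * Real.exp (2 * θ ^ 2) * (4 * θ)⁻¹ := sdb4_valA hθ0
  have hBval : ∫ p in (univ : Set ℝ) ×ˢ Ioi (0:ℝ),
      Real.exp (-(p.1 - p.2) ^ 2 / 2 - 2 * θ * (p.1 + p.2)) =
      Real.sqrt (2 * π) * Real.exp (2 * θ ^ 2) * (4 * θ)⁻¹ := by
    rw [← hval, ← hmp.setIntegral_preimage_emb hemb
      (fun p : ℝ × ℝ => Real.exp (-(p.1 - p.2) ^ 2 / 2 - 2 * θ * (p.1 + p.2)))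
      ((univ : Set ℝ) ×ˢ Ioi (0:ℝ)), hpre]
    refine integral_congr_ae (Filter.Eventually.of_forall fun p => ?_)
    exact congrFun hsym p
  have hfpos : ∀ p : ℝ × ℝ,
      0 ≤ Real.exp (-(p.1 - p.2) ^ 2 / 2 - 2 * θ * (p.1 + p.2)) :=
    fun p => (Real.exp_pos _).le
  have hsub : ((Set.Iic (0 : ℝ)) ×ˢ (Set.Iic (0 : ℝ)))ᶜ ⊆
      Ioi (0:ℝ) ×ˢ (univ : Set ℝ) ∪ (univ : Set ℝ) ×ˢ Ioi (0:ℝ) := by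
    intro p hp
    simp only [Set.mem_compl_iff, Set.mem_prod, Set.mem_Iic, not_and_or, not_le] at hp
    rcases hp with h | h
    · exact Or.inl ⟨h, trivial⟩
    · exact Or.inr ⟨trivial, h⟩
  have hAB : IntegrableOn (fun p : ℝ × ℝ => Real.exp (-(p.1 - p.2) ^ 2 / 2 - 2 * θ * (p.1 + p.2)))
      (Ioi (0:ℝ) ×ˢ (univ : Set ℝ) ∪ (univ : Set ℝ) ×ˢ Ioi (0:ℝ)) := hA.union hB
  have step1 : ∫ p in ((Set.Iic (0 : ℝ)) ×ˢ (Set.Iic (0 : ℝ)))ᶜ,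
      Real.exp (-(p.1 - p.2) ^ 2 / 2 - 2 * θ * (p.1 + p.2)) ≤
      ∫ p in Ioi (0:ℝ) ×ˢ (univ : Set ℝ) ∪ (univ : Set ℝ) ×ˢ Ioi (0:ℝ),
        Real.exp (-(p.1 - p.2) ^ 2 / 2 - 2 * θ * (p.1 + p.2)) :=
    setIntegral_mono_set hAB (Filter.Eventually.of_forall hfpos)
      (HasSubset.Subset.eventuallyLE hsub)
  have step2 : ∫ p in Ioi (0:ℝ) ×ˢ (univ : Set ℝ) ∪ (univ : Set ℝ) ×ˢ Ioi (0:ℝ),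
        Real.exp (-(p.1 - p.2) ^ 2 / 2 - 2 * θ * (p.1 + p.2)) ≤
      (∫ p in Ioi (0:ℝ) ×ˢ (univ : Set ℝ),
        Real.exp (-(p.1 - p.2) ^ 2 / 2 - 2 * θ * (p.1 + p.2))) +
      ∫ p in (univ : Set ℝ) ×ˢ Ioi (0:ℝ),
        Real.exp (-(p.1 - p.2) ^ 2 / 2 - 2 * θ * (p.1 + p.2)) := by
    rw [← union_diff_self, setIntegral_union disjoint_sdiff_right
      ((MeasurableSet.univ.prod measurableSet_Ioi).diff
        (measurableSet_Ioi.prod MeasurableSet.univ)) hA (hB.mono_set diff_subset)]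
    have h := setIntegral_mono_set hB (Filter.Eventually.of_forall hfpos)
      (HasSubset.Subset.eventuallyLE
        (diff_subset (s := (univ : Set ℝ) ×ˢ Ioi (0:ℝ)) (t := Ioi (0:ℝ) ×ˢ (univ : Set ℝ))))
    linarith
  have hsqrt : Real.sqrt (2 * π) ≤ 3 := by
    rw [show (3:ℝ) = Real.sqrt 9 by
      rw [show (9:ℝ) = 3 ^ 2 by norm_num, Real.sqrt_sq (by norm_num : (0:ℝ) ≤ 3)]]
    exact Real.sqrt_le_sqrt (by nlinarith [Real.pi_le_four])
  have hE : (0:ℝ) < Real.exp (2 * θ ^ 2) := Real.exp_pos _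
  have hinv : (4 * θ)⁻¹ ≤ 4⁻¹ := by
    apply inv_anti₀ (by norm_num)
    linarith
  have hinv0 : (0:ℝ) ≤ (4 * θ)⁻¹ := by positivity
  have hsq0 := Real.sqrt_nonneg (2 * π)
  calc ∫ p in ((Set.Iic (0 : ℝ)) ×ˢ (Set.Iic (0 : ℝ)))ᶜ,
        Real.exp (-(p.1 - p.2) ^ 2 / 2 - 2 * θ * (p.1 + p.2))
      ≤ _ := step1
    _ ≤ _ := step2
    _ ≤ 3 * θ * Real.exp (2 * θ ^ 2) := by
        rw [hval, hBval]
        have h1 : Real.sqrt (2 * π) * (4 * θ)⁻¹ ≤ 3 * 4⁻¹ :=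
          mul_le_mul hsqrt hinv hinv0 (by norm_num)
        nlinarith [mul_le_mul_of_nonneg_right h1 hE.le,
          mul_le_mul_of_nonneg_right hθ hE.le]
end

section
/- There exists a constant c₅ > 0 such that for all θ ≥ 1, ∫_{ℝ² \ (−∞,0]²} y² exp(−(x−y)²/2 − 2θ(x+y)) dx dy ≤ c₅ θ³ exp(2θ²). -/
open MeasureTheory Real Set


-- gaussian with /4 exponent, shifted: integrability
lemma sdb5_gauss_int (m : ℝ) : Integrable (fun y : ℝ => Real.exp (-(y - m) ^ 2 / 4)) := by
  have h : (fun y : ℝ => Real.exp (-(y - m) ^ 2 / 4))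
      = (fun y : ℝ => (fun u : ℝ => Real.exp (-(1/4 : ℝ) * u ^ 2)) (y - m)) := by
    funext y; ring_nf
  rw [h]
  exact (integrable_exp_neg_mul_sq (by norm_num : (0:ℝ) < 1/4)).comp_sub_right m

lemma sdb5_gauss_eval (m : ℝ) :
    ∫ y : ℝ, Real.exp (-(y - m) ^ 2 / 4) = 2 * Real.sqrt π := by
  have h : (fun y : ℝ => Real.exp (-(y - m) ^ 2 / 4))
      = (fun y : ℝ => (fun u : ℝ => Real.exp (-(1/4 : ℝ) * u ^ 2)) (y - m)) := by
    funext y; ring_nf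
  rw [h, integral_sub_right_eq_self (fun u : ℝ => Real.exp (-(1/4 : ℝ) * u ^ 2)) m,
    integral_gaussian]
  rw [show (π / (1/4 : ℝ)) = 2 ^ 2 * π by ring, Real.sqrt_mul (by positivity) π,
    Real.sqrt_sq (by norm_num)]


lemma sdb5_aux (a u m : ℝ) (ha : 0 < a) (ha1 : a ≤ 1) (hub : u ^ 2 * a ≤ 4) :
    (u + m) ^ 2 * (a * a) ≤ (8 + 2 * m ^ 2) * a := by
  have h1 : u ^ 2 * a * a ≤ 4 * a := mul_le_mul_of_nonneg_right hub ha.le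
  have h2 : 0 ≤ (u - m) ^ 2 * (a * a) := by positivity
  have h3 : m ^ 2 * a * a ≤ m ^ 2 * a * 1 := by
    have : 0 ≤ m ^ 2 * a := by positivity
    exact mul_le_mul_of_nonneg_left ha1 this
  nlinarith [h1, h2, h3]

lemma sdb5_expbound (u : ℝ) : u ^ 2 * Real.exp (-u ^ 2 / 4) ≤ 4 := by
  have h1 : u ^ 2 / 4 + 1 ≤ Real.exp (u ^ 2 / 4) := Real.add_one_le_exp _
  have h2 : Real.exp (-u ^ 2 / 4) * Real.exp (u ^ 2 / 4) = 1 := by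
    rw [← Real.exp_add]; ring_nf; exact Real.exp_zero
  have hp : (0:ℝ) < Real.exp (-u ^ 2 / 4) := Real.exp_pos _
  nlinarith [mul_le_mul_of_nonneg_right h1 hp.le]

lemma sdb5_key1 (m y : ℝ) :
    y ^ 2 * Real.exp (-(y - m) ^ 2 / 2) ≤ (8 + 2 * m ^ 2) * Real.exp (-(y - m) ^ 2 / 4) := by
  have hsplit : Real.exp (-(y - m) ^ 2 / 2)
      = Real.exp (-(y - m) ^ 2 / 4) * Real.exp (-(y - m) ^ 2 / 4) := by
    rw [← Real.exp_add]; ring_nf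
  have hle1 : Real.exp (-(y - m) ^ 2 / 4) ≤ 1 := by
    rw [Real.exp_le_one_iff]
    have : (0:ℝ) ≤ (y - m) ^ 2 := sq_nonneg _
    linarith
  have := sdb5_aux (Real.exp (-(y - m) ^ 2 / 4)) (y - m) m (Real.exp_pos _) hle1
    (sdb5_expbound (y - m))
  rw [hsplit]
  calc y ^ 2 * (Real.exp (-(y - m) ^ 2 / 4) * Real.exp (-(y - m) ^ 2 / 4))
      = (y - m + m) ^ 2 * (Real.exp (-(y - m) ^ 2 / 4) * Real.exp (-(y - m) ^ 2 / 4)) := by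
        ring
    _ ≤ (8 + 2 * m ^ 2) * Real.exp (-(y - m) ^ 2 / 4) := this
-- pointwise bound, piece A (inner variable y)
lemma sdb5_ineqA (θ x y : ℝ) :
    y ^ 2 * Real.exp (-(x - y) ^ 2 / 2 - 2 * θ * (x + y)) ≤
      (Real.exp (2 * θ ^ 2) * Real.exp (-(4 * θ) * x) * (8 + 2 * (x - 2 * θ) ^ 2)) *
        Real.exp (-(y - (x - 2 * θ)) ^ 2 / 4) := by
  have hexp : Real.exp (-(x - y) ^ 2 / 2 - 2 * θ * (x + y))
      = Real.exp (-(y - (x - 2 * θ)) ^ 2 / 2) *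
        (Real.exp (2 * θ ^ 2) * Real.exp (-(4 * θ) * x)) := by
    rw [← Real.exp_add, ← Real.exp_add]; congr 1; ring
  rw [hexp]
  have h := sdb5_key1 (x - 2 * θ) y
  have hC : (0:ℝ) ≤ Real.exp (2 * θ ^ 2) * Real.exp (-(4 * θ) * x) := by positivity
  calc y ^ 2 * (Real.exp (-(y - (x - 2 * θ)) ^ 2 / 2) *
        (Real.exp (2 * θ ^ 2) * Real.exp (-(4 * θ) * x)))
      = (y ^ 2 * Real.exp (-(y - (x - 2 * θ)) ^ 2 / 2)) *
        (Real.exp (2 * θ ^ 2) * Real.exp (-(4 * θ) * x)) := by ring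
    _ ≤ ((8 + 2 * (x - 2 * θ) ^ 2) * Real.exp (-(y - (x - 2 * θ)) ^ 2 / 4)) *
        (Real.exp (2 * θ ^ 2) * Real.exp (-(4 * θ) * x)) := mul_le_mul_of_nonneg_right h hC
    _ = _ := by ring

-- pointwise bound, piece B (inner variable x)
lemma sdb5_ineqB (θ x y : ℝ) :
    y ^ 2 * Real.exp (-(x - y) ^ 2 / 2 - 2 * θ * (x + y)) ≤
      (Real.exp (2 * θ ^ 2) * (y ^ 2 * Real.exp (-(4 * θ) * y))) *
        Real.exp (-(x - (y - 2 * θ)) ^ 2 / 4) := by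
  have hexp : Real.exp (-(x - y) ^ 2 / 2 - 2 * θ * (x + y))
      = Real.exp (-(x - (y - 2 * θ)) ^ 2 / 2) *
        (Real.exp (2 * θ ^ 2) * Real.exp (-(4 * θ) * y)) := by
    rw [← Real.exp_add, ← Real.exp_add]; congr 1; ring
  rw [hexp]
  have h : Real.exp (-(x - (y - 2 * θ)) ^ 2 / 2) ≤ Real.exp (-(x - (y - 2 * θ)) ^ 2 / 4) := by
    apply Real.exp_le_exp.2
    have : (0:ℝ) ≤ (x - (y - 2 * θ)) ^ 2 := sq_nonneg _
    linarith
  have hC : (0:ℝ) ≤ y ^ 2 * (Real.exp (2 * θ ^ 2) * Real.exp (-(4 * θ) * y)) := by positivity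
  calc y ^ 2 * (Real.exp (-(x - (y - 2 * θ)) ^ 2 / 2) *
        (Real.exp (2 * θ ^ 2) * Real.exp (-(4 * θ) * y)))
      = (y ^ 2 * (Real.exp (2 * θ ^ 2) * Real.exp (-(4 * θ) * y))) *
          Real.exp (-(x - (y - 2 * θ)) ^ 2 / 2) := by ring
    _ ≤ (y ^ 2 * (Real.exp (2 * θ ^ 2) * Real.exp (-(4 * θ) * y))) *
          Real.exp (-(x - (y - 2 * θ)) ^ 2 / 4) := mul_le_mul_of_nonneg_left h hC
    _ = _ := by ring

-- outer bound, piece A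
lemma sdb5_outerA {θ x : ℝ} (hθ : 1 ≤ θ) (hx : 0 < x) :
    Real.exp (-(4 * θ) * x) * (8 + 2 * (x - 2 * θ) ^ 2) ≤ 40 * θ ^ 2 * Real.exp (-x) := by
  have h1 : Real.exp (-(4 * θ) * x) ≤ Real.exp (-x) * Real.exp (-3 * x) := by
    rw [← Real.exp_add]
    apply Real.exp_le_exp.2
    nlinarith
  have h2 : 8 + 2 * (x - 2 * θ) ^ 2 ≤ 24 * θ ^ 2 + 4 * x ^ 2 := by
    nlinarith [sq_nonneg (x + 2 * θ)]
  have hx2 : x ^ 2 ≤ 4 * Real.exp x := by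
    have h := Real.add_one_le_exp (x / 2)
    have hsq : Real.exp (x / 2) * Real.exp (x / 2) = Real.exp x := by
      rw [← Real.exp_add]; ring_nf
    nlinarith [Real.exp_pos (x / 2)]
  have he3 : Real.exp (-3 * x) ≤ 1 := Real.exp_le_one_iff.mpr (by linarith)
  have hex3 : Real.exp x * Real.exp (-3 * x) ≤ 1 := by
    rw [← Real.exp_add]; exact Real.exp_le_one_iff.mpr (by linarith)
  have key : (8 + 2 * (x - 2 * θ) ^ 2) * Real.exp (-3 * x) ≤ 40 * θ ^ 2 := by
    have e3p : (0:ℝ) < Real.exp (-3 * x) := Real.exp_pos _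
    have hA : (24 * θ ^ 2) * Real.exp (-3 * x) ≤ 24 * θ ^ 2 := by nlinarith
    have hB : (4 * x ^ 2) * Real.exp (-3 * x) ≤ 16 := by nlinarith
    have hone : (1:ℝ) ≤ θ ^ 2 := by nlinarith
    nlinarith [mul_le_mul_of_nonneg_right h2 e3p.le]
  calc Real.exp (-(4 * θ) * x) * (8 + 2 * (x - 2 * θ) ^ 2)
      ≤ (Real.exp (-x) * Real.exp (-3 * x)) * (8 + 2 * (x - 2 * θ) ^ 2) := by
        apply mul_le_mul_of_nonneg_right h1; positivity
    _ = Real.exp (-x) * ((8 + 2 * (x - 2 * θ) ^ 2) * Real.exp (-3 * x)) := by ring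
    _ ≤ Real.exp (-x) * (40 * θ ^ 2) := by
        apply mul_le_mul_of_nonneg_left key (Real.exp_pos _).le
    _ = 40 * θ ^ 2 * Real.exp (-x) := by ring

-- outer bound, piece B
lemma sdb5_outerB {θ y : ℝ} (hθ : 1 ≤ θ) (hy : 0 < y) :
    y ^ 2 * Real.exp (-(4 * θ) * y) ≤ 4 * Real.exp (-y) := by
  have h1 : Real.exp (-(4 * θ) * y) ≤ Real.exp (-y) * Real.exp (-3 * y) := by
    rw [← Real.exp_add]; apply Real.exp_le_exp.2; nlinarith
  have hy2 : y ^ 2 ≤ 4 * Real.exp y := by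
    have h := Real.add_one_le_exp (y / 2)
    have hsq : Real.exp (y / 2) * Real.exp (y / 2) = Real.exp y := by
      rw [← Real.exp_add]; ring_nf
    nlinarith [Real.exp_pos (y / 2)]
  have hex3 : Real.exp y * Real.exp (-3 * y) ≤ 1 := by
    rw [← Real.exp_add]; exact Real.exp_le_one_iff.mpr (by linarith)
  calc y ^ 2 * Real.exp (-(4 * θ) * y)
      ≤ y ^ 2 * (Real.exp (-y) * Real.exp (-3 * y)) := by
        apply mul_le_mul_of_nonneg_left h1 (sq_nonneg y)
    _ = Real.exp (-y) * (y ^ 2 * Real.exp (-3 * y)) := by ring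
    _ ≤ Real.exp (-y) * 4 := by
        apply mul_le_mul_of_nonneg_left _ (Real.exp_pos _).le
        nlinarith [Real.exp_pos (-3 * y), mul_le_mul_of_nonneg_right hy2 (Real.exp_pos (-3*y)).le]
    _ = 4 * Real.exp (-y) := by ring
lemma sdb5_exp_intOn : IntegrableOn (fun x : ℝ => Real.exp (-x)) (Ioi 0) := by
  have h := exp_neg_integrableOn_Ioi 0 (zero_lt_one (α := ℝ))
  simpa using h

theorem steepest_descent_bound_5 :
    ∃ c₅ : ℝ, 0 < c₅ ∧ ∀ θ : ℝ, 1 ≤ θ →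
      ∫ p in ((Set.Iic (0 : ℝ)) ×ˢ (Set.Iic (0 : ℝ)))ᶜ,
          p.2 ^ 2 * Real.exp (-(p.1 - p.2) ^ 2 / 2 - 2 * θ * (p.1 + p.2)) ≤
        c₅ * θ ^ 3 * Real.exp (2 * θ ^ 2) := by
  refine ⟨200, by norm_num, fun θ hθ => ?_⟩
  set f : ℝ × ℝ → ℝ := fun p =>
    p.2 ^ 2 * Real.exp (-(p.1 - p.2) ^ 2 / 2 - 2 * θ * (p.1 + p.2)) with hf
  have hfmeas : Measurable f := by fun_prop
  have hfnn : ∀ p, 0 ≤ f p := fun p => by positivity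
  have hofmeas : Measurable fun p : ℝ × ℝ => ENNReal.ofReal (f p) :=
    ENNReal.measurable_ofReal.comp hfmeas
  have hθpos : (0:ℝ) < θ := lt_of_lt_of_le one_pos hθ
  -- the two pieces
  have hA : ∫⁻ p in (Ioi (0:ℝ)) ×ˢ (univ : Set ℝ), ENNReal.ofReal (f p) ≤
      ENNReal.ofReal (Real.exp (2 * θ ^ 2) * (40 * θ ^ 2) * (2 * Real.sqrt π)) := by
    have hres : (volume : Measure (ℝ × ℝ)).restrict ((Ioi (0:ℝ)) ×ˢ (univ : Set ℝ))
        = ((volume : Measure ℝ).restrict (Ioi 0)).prod (volume : Measure ℝ) := by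
      rw [Measure.volume_eq_prod, ← Measure.prod_restrict, Measure.restrict_univ]
    rw [hres, lintegral_prod _ hofmeas.aemeasurable]
    calc ∫⁻ x in Ioi (0:ℝ), ∫⁻ y, ENNReal.ofReal (f (x, y))
        ≤ ∫⁻ x in Ioi (0:ℝ), ENNReal.ofReal
            ((Real.exp (2 * θ ^ 2) * (40 * θ ^ 2) * (2 * Real.sqrt π)) * Real.exp (-x)) := by
          apply setLIntegral_mono' measurableSet_Ioi
          intro x hx
          have hstep1 : ∫⁻ y, ENNReal.ofReal (f (x, y)) ≤
              ∫⁻ y, ENNReal.ofReal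
                ((Real.exp (2 * θ ^ 2) * Real.exp (-(4 * θ) * x) * (8 + 2 * (x - 2 * θ) ^ 2)) *
                  Real.exp (-(y - (x - 2 * θ)) ^ 2 / 4)) :=
            lintegral_mono fun y => ENNReal.ofReal_le_ofReal (sdb5_ineqA θ x y)
          have hstep2 : ∫⁻ y, ENNReal.ofReal
                ((Real.exp (2 * θ ^ 2) * Real.exp (-(4 * θ) * x) * (8 + 2 * (x - 2 * θ) ^ 2)) *
                  Real.exp (-(y - (x - 2 * θ)) ^ 2 / 4))
              = ENNReal.ofReal
                ((Real.exp (2 * θ ^ 2) * Real.exp (-(4 * θ) * x) * (8 + 2 * (x - 2 * θ) ^ 2)) *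
                  (2 * Real.sqrt π)) := by
            rw [← ofReal_integral_eq_lintegral_ofReal
              (((sdb5_gauss_int (x - 2 * θ))).const_mul _)
              (ae_of_all _ fun y => by positivity)]
            rw [integral_const_mul, sdb5_gauss_eval]
          refine (hstep1.trans hstep2.le).trans (ENNReal.ofReal_le_ofReal ?_)
          have h := mul_le_mul_of_nonneg_right (sdb5_outerA hθ hx)
            (show (0:ℝ) ≤ Real.exp (2 * θ ^ 2) * (2 * Real.sqrt π) by positivity)
          nlinarith [h]
      _ = ENNReal.ofReal (Real.exp (2 * θ ^ 2) * (40 * θ ^ 2) * (2 * Real.sqrt π)) := by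
          rw [← ofReal_integral_eq_lintegral_ofReal (sdb5_exp_intOn.const_mul _)
            (ae_of_all _ fun x => by positivity)]
          rw [integral_const_mul, integral_exp_neg_Ioi_zero, mul_one]
  have hB : ∫⁻ p in (univ : Set ℝ) ×ˢ (Ioi (0:ℝ)), ENNReal.ofReal (f p) ≤
      ENNReal.ofReal (Real.exp (2 * θ ^ 2) * 4 * (2 * Real.sqrt π)) := by
    have hres : (volume : Measure (ℝ × ℝ)).restrict ((univ : Set ℝ) ×ˢ (Ioi (0:ℝ)))
        = (volume : Measure ℝ).prod ((volume : Measure ℝ).restrict (Ioi 0)) := by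
      rw [Measure.volume_eq_prod, ← Measure.prod_restrict, Measure.restrict_univ]
    rw [hres, lintegral_prod_symm _ hofmeas.aemeasurable]
    calc ∫⁻ y in Ioi (0:ℝ), ∫⁻ x, ENNReal.ofReal (f (x, y))
        ≤ ∫⁻ y in Ioi (0:ℝ), ENNReal.ofReal
            ((Real.exp (2 * θ ^ 2) * 4 * (2 * Real.sqrt π)) * Real.exp (-y)) := by
          apply setLIntegral_mono' measurableSet_Ioi
          intro y hy
          have hstep1 : ∫⁻ x, ENNReal.ofReal (f (x, y)) ≤
              ∫⁻ x, ENNReal.ofReal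
                ((Real.exp (2 * θ ^ 2) * (y ^ 2 * Real.exp (-(4 * θ) * y))) *
                  Real.exp (-(x - (y - 2 * θ)) ^ 2 / 4)) :=
            lintegral_mono fun x => ENNReal.ofReal_le_ofReal (sdb5_ineqB θ x y)
          have hstep2 : ∫⁻ x, ENNReal.ofReal
                ((Real.exp (2 * θ ^ 2) * (y ^ 2 * Real.exp (-(4 * θ) * y))) *
                  Real.exp (-(x - (y - 2 * θ)) ^ 2 / 4))
              = ENNReal.ofReal
                ((Real.exp (2 * θ ^ 2) * (y ^ 2 * Real.exp (-(4 * θ) * y))) *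
                  (2 * Real.sqrt π)) := by
            rw [← ofReal_integral_eq_lintegral_ofReal
              (((sdb5_gauss_int (y - 2 * θ))).const_mul _)
              (ae_of_all _ fun x => by positivity)]
            rw [integral_const_mul, sdb5_gauss_eval]
          refine (hstep1.trans hstep2.le).trans (ENNReal.ofReal_le_ofReal ?_)
          have h := mul_le_mul_of_nonneg_right (sdb5_outerB hθ hy)
            (show (0:ℝ) ≤ Real.exp (2 * θ ^ 2) * (2 * Real.sqrt π) by positivity)
          nlinarith [h]
      _ = ENNReal.ofReal (Real.exp (2 * θ ^ 2) * 4 * (2 * Real.sqrt π)) := by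
          rw [← ofReal_integral_eq_lintegral_ofReal (sdb5_exp_intOn.const_mul _)
            (ae_of_all _ fun x => by positivity)]
          rw [integral_const_mul, integral_exp_neg_Ioi_zero, mul_one]
  -- subset of union
  have hsub : ((Set.Iic (0 : ℝ)) ×ˢ (Set.Iic (0 : ℝ)))ᶜ ⊆
      ((Ioi (0:ℝ)) ×ˢ (univ : Set ℝ)) ∪ ((univ : Set ℝ) ×ˢ (Ioi (0:ℝ))) := by
    intro p hp
    simp only [Set.mem_compl_iff, Set.mem_prod, Set.mem_Iic, not_and_or, not_le] at hp
    rcases hp with h | h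
    · exact Or.inl ⟨h, mem_univ _⟩
    · exact Or.inr ⟨mem_univ _, h⟩
  -- bounding the lintegral
  have hbound : ∫⁻ p in ((Set.Iic (0 : ℝ)) ×ˢ (Set.Iic (0 : ℝ)))ᶜ, ENNReal.ofReal (f p) ≤
      ENNReal.ofReal (200 * θ ^ 3 * Real.exp (2 * θ ^ 2)) := by
    have hsp : Real.sqrt π ≤ 2 := by
      rw [show (2:ℝ) = Real.sqrt (2 ^ 2) by rw [Real.sqrt_sq]; norm_num]
      exact Real.sqrt_le_sqrt (by nlinarith [pi_le_four])
    have hcore : Real.exp (2 * θ ^ 2) * (40 * θ ^ 2) * (2 * Real.sqrt π)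
        + Real.exp (2 * θ ^ 2) * 4 * (2 * Real.sqrt π) ≤ 200 * θ ^ 3 * Real.exp (2 * θ ^ 2) := by
      have hE : (0:ℝ) < Real.exp (2 * θ ^ 2) := Real.exp_pos _
      have hsn : (0:ℝ) ≤ Real.sqrt π := Real.sqrt_nonneg _
      have h1 : 80 * θ ^ 2 * Real.sqrt π + 8 * Real.sqrt π ≤ 200 * θ ^ 3 := by
        nlinarith [mul_nonneg (sq_nonneg θ) (sub_nonneg.2 hsp),
          mul_nonneg (sub_nonneg.2 hθ) (by linarith : (0:ℝ) ≤ θ + 1),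
          mul_nonneg (sq_nonneg θ) (sub_nonneg.2 hθ)]
      nlinarith [mul_le_mul_of_nonneg_right h1 hE.le]
    calc ∫⁻ p in ((Set.Iic (0 : ℝ)) ×ˢ (Set.Iic (0 : ℝ)))ᶜ, ENNReal.ofReal (f p)
        ≤ ∫⁻ p in ((Ioi (0:ℝ)) ×ˢ (univ : Set ℝ)) ∪ ((univ : Set ℝ) ×ˢ (Ioi (0:ℝ))),
            ENNReal.ofReal (f p) := lintegral_mono_set hsub
      _ ≤ (∫⁻ p in (Ioi (0:ℝ)) ×ˢ (univ : Set ℝ), ENNReal.ofReal (f p))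
          + ∫⁻ p in (univ : Set ℝ) ×ˢ (Ioi (0:ℝ)), ENNReal.ofReal (f p) :=
          lintegral_union_le _ _ _
      _ ≤ ENNReal.ofReal (Real.exp (2 * θ ^ 2) * (40 * θ ^ 2) * (2 * Real.sqrt π))
          + ENNReal.ofReal (Real.exp (2 * θ ^ 2) * 4 * (2 * Real.sqrt π)) := add_le_add hA hB
      _ = ENNReal.ofReal (Real.exp (2 * θ ^ 2) * (40 * θ ^ 2) * (2 * Real.sqrt π)
          + Real.exp (2 * θ ^ 2) * 4 * (2 * Real.sqrt π)) := by
          rw [ENNReal.ofReal_add (by positivity) (by positivity)]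
      _ ≤ ENNReal.ofReal (200 * θ ^ 3 * Real.exp (2 * θ ^ 2)) :=
          ENNReal.ofReal_le_ofReal hcore
  -- convert Bochner integral to lintegral
  rw [integral_eq_lintegral_of_nonneg_ae (ae_of_all _ fun p => hfnn p)
    hfmeas.aestronglyMeasurable.restrict]
  exact ENNReal.toReal_le_of_le_ofReal (by positivity) hbound
end

section
/- Let c₁, c₂ > 0, let N > 0, and let ζ ∈ ℝ. Then ∫₀^N ∫₀^N c₁ exp(−c₂ (x − y + ζ)²) dx dy ≤ ∫₀^N ∫₀^N c₁ exp(−c₂ (x − y)²) dx dy; that is, the function ζ ↦ ∫₀^N ∫₀^N c₁ exp(−c₂ (x − y + ζ)²) dx dy is maximized at ζ = 0. -/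
open MeasureTheory intervalIntegral Real Set

namespace GaussMaxAux

noncomputable def B (c₂ N t : ℝ) : ℝ :=
  ∫ y in Ioc (0 : ℝ) N, Real.exp (-(2 * c₂) * (t - y) ^ 2)

lemma gauss_conv (a w : ℝ) :
    ∫ s : ℝ, Real.exp (-a * s ^ 2) * Real.exp (-a * (s - w) ^ 2)
      = Real.sqrt (Real.pi / (2 * a)) * Real.exp (-(a / 2) * w ^ 2) := by
  have h : ∀ s : ℝ, Real.exp (-a * s ^ 2) * Real.exp (-a * (s - w) ^ 2)
      = Real.exp (-(2 * a) * (s - w / 2) ^ 2) * Real.exp (-(a / 2) * w ^ 2) := by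
    intro s
    rw [← Real.exp_add, ← Real.exp_add]
    ring_nf
  simp_rw [h]
  rw [MeasureTheory.integral_mul_const,
    integral_sub_right_eq_self (fun s => Real.exp (-(2 * a) * s ^ 2)) (w / 2),
    integral_gaussian]

lemma conv_eval (b c d : ℝ) :
    ∫ t : ℝ, Real.exp (-b * (t - c) ^ 2) * Real.exp (-b * (t - d) ^ 2)
      = Real.sqrt (Real.pi / (2 * b)) * Real.exp (-(b / 2) * (d - c) ^ 2) := by
  have h1 : (fun t : ℝ => Real.exp (-b * (t - c) ^ 2) * Real.exp (-b * (t - d) ^ 2))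
      = fun t => (fun s => Real.exp (-b * s ^ 2) * Real.exp (-b * (s - (d - c)) ^ 2)) (t - c) := by
    funext t; ring_nf
  rw [h1, integral_sub_right_eq_self
    (fun s => Real.exp (-b * s ^ 2) * Real.exp (-b * (s - (d - c)) ^ 2)) c, gauss_conv]

lemma integral_gauss_shift (b c : ℝ) :
    ∫ t : ℝ, Real.exp (-b * (t - c) ^ 2) = Real.sqrt (Real.pi / b) := by
  rw [integral_sub_right_eq_self (fun t => Real.exp (-b * t ^ 2)) c, integral_gaussian]

lemma integrable_gauss_shift (b c : ℝ) (hb : 0 < b) :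
    Integrable (fun t : ℝ => Real.exp (-b * (t - c) ^ 2)) :=
  (integrable_exp_neg_mul_sq hb).comp_sub_right c

lemma integrable_gauss_mul (b c d : ℝ) (hb : 0 < b) :
    Integrable (fun t : ℝ => Real.exp (-b * (t - c) ^ 2) * Real.exp (-b * (t - d) ^ 2)) := by
  refine (integrable_gauss_shift b d hb).mono'
    (Continuous.aestronglyMeasurable (by fun_prop)) ?_
  filter_upwards with t
  rw [Real.norm_of_nonneg (by positivity)]
  have h1 : Real.exp (-b * (t - c) ^ 2) ≤ 1 :=
    Real.exp_le_one_iff.mpr (by nlinarith [sq_nonneg (t - c)])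
  nlinarith [Real.exp_pos (-b * (t - d) ^ 2)]

variable {c₂ N : ℝ}

lemma B_nonneg (t : ℝ) : 0 ≤ B c₂ N t :=
  integral_nonneg fun _ => (Real.exp_pos _).le

lemma B_le (hc₂ : 0 < c₂) (hN : 0 < N) (t : ℝ) : B c₂ N t ≤ N := by
  have h : ‖∫ y in Ioc (0 : ℝ) N, Real.exp (-(2 * c₂) * (t - y) ^ 2)‖
      ≤ 1 * (volume (Ioc (0 : ℝ) N)).toReal := by
    refine norm_setIntegral_le_of_norm_le_const measure_Ioc_lt_top ?_
    intro y _
    rw [Real.norm_of_nonneg (Real.exp_pos _).le]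
    exact Real.exp_le_one_iff.mpr (by nlinarith [sq_nonneg (t - y), hc₂])
  calc B c₂ N t ≤ ‖B c₂ N t‖ := le_abs_self _
    _ ≤ 1 * (volume (Ioc (0 : ℝ) N)).toReal := h
    _ = N := by simp [Real.volume_Ioc, ENNReal.toReal_ofReal hN.le]

lemma B_sm : StronglyMeasurable (B c₂ N) := by
  apply MeasureTheory.StronglyMeasurable.integral_prod_right
    (f := fun t y => Real.exp (-(2 * c₂) * (t - y) ^ 2))
  have hc : Continuous (fun p : ℝ × ℝ => Real.exp (-(2 * c₂) * (p.1 - p.2) ^ 2)) := by fun_prop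
  exact hc.stronglyMeasurable

instance : IsFiniteMeasure (volume.restrict (Ioc (0 : ℝ) N)) :=
  ⟨by rw [Measure.restrict_apply_univ]; exact measure_Ioc_lt_top⟩

lemma B_integrable (hc₂ : 0 < c₂) : Integrable (B c₂ N) := by
  have hc : Continuous (fun p : ℝ × ℝ => Real.exp (-(2 * c₂) * (p.1 - p.2) ^ 2)) := by fun_prop
  have hF : Integrable (fun p : ℝ × ℝ => Real.exp (-(2 * c₂) * (p.1 - p.2) ^ 2))
      (volume.prod (volume.restrict (Ioc (0 : ℝ) N))) := by
    refine (integrable_prod_iff' hc.aestronglyMeasurable).mpr ⟨?_, ?_⟩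
    · filter_upwards with y
      exact integrable_gauss_shift _ y (by positivity)
    · have he : (fun y : ℝ => ∫ t : ℝ, ‖Real.exp (-(2 * c₂) * (t - y) ^ 2)‖)
          = fun _ => Real.sqrt (Real.pi / (2 * c₂)) := by
        funext y
        have hn : ∀ t : ℝ, ‖Real.exp (-(2 * c₂) * (t - y) ^ 2)‖
            = Real.exp (-(2 * c₂) * (t - y) ^ 2) :=
          fun t => Real.norm_of_nonneg (Real.exp_pos _).le
        simp_rw [hn]
        exact integral_gauss_shift _ y
      rw [he]
      exact integrable_const _
  exact hF.integral_prod_left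

lemma main_id (hc₂ : 0 < c₂) (hN : 0 < N) (ζ : ℝ) :
    ∫ x in Ioc (0 : ℝ) N, ∫ y in Ioc (0 : ℝ) N, Real.exp (-c₂ * (x - y + ζ) ^ 2)
      = (Real.sqrt (Real.pi / (4 * c₂)))⁻¹ * ∫ t : ℝ, B c₂ N t * B c₂ N (t - ζ) := by
  set C := Real.sqrt (Real.pi / (4 * c₂)) with hCdef
  have hC : 0 < C := Real.sqrt_pos.mpr (by positivity)
  have hb : 0 < 2 * c₂ := by positivity
  have key : ∀ x y : ℝ,
      (∫ t : ℝ, Real.exp (-(2 * c₂) * (t - y) ^ 2) * Real.exp (-(2 * c₂) * (t - (x + ζ)) ^ 2))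
        = C * Real.exp (-c₂ * (x - y + ζ) ^ 2) := by
    intro x y
    have e2 : Real.pi / (2 * (2 * c₂)) = Real.pi / (4 * c₂) := by ring
    have e1 : -(2 * c₂ / 2) * (x + ζ - y) ^ 2 = -c₂ * (x - y + ζ) ^ 2 := by ring
    rw [conv_eval, e2, e1]
  have key2 : ∀ x y : ℝ, Real.exp (-c₂ * (x - y + ζ) ^ 2)
      = C⁻¹ * ∫ t : ℝ, Real.exp (-(2 * c₂) * (t - y) ^ 2)
          * Real.exp (-(2 * c₂) * (t - (x + ζ)) ^ 2) := by
    intro x y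
    rw [key x y, inv_mul_cancel_left₀ hC.ne']
  simp_rw [key2, MeasureTheory.integral_const_mul]
  congr 1
  -- Fubini steps
  have swap1 : ∀ x : ℝ,
      (∫ y in Ioc (0 : ℝ) N, ∫ t : ℝ, Real.exp (-(2 * c₂) * (t - y) ^ 2)
          * Real.exp (-(2 * c₂) * (t - (x + ζ)) ^ 2))
        = ∫ t : ℝ, B c₂ N t * Real.exp (-(2 * c₂) * (t - (x + ζ)) ^ 2) := by
    intro x
    have hcont : Continuous (fun p : ℝ × ℝ => Real.exp (-(2 * c₂) * (p.2 - p.1) ^ 2)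
        * Real.exp (-(2 * c₂) * (p.2 - (x + ζ)) ^ 2)) := by fun_prop
    have hf : Integrable (Function.uncurry fun y t : ℝ =>
        Real.exp (-(2 * c₂) * (t - y) ^ 2) * Real.exp (-(2 * c₂) * (t - (x + ζ)) ^ 2))
        ((volume.restrict (Ioc (0 : ℝ) N)).prod volume) := by
      refine (integrable_prod_iff hcont.aestronglyMeasurable).mpr ⟨?_, ?_⟩
      · filter_upwards with y
        exact integrable_gauss_mul _ y (x + ζ) hb
      · have he : (fun y : ℝ => ∫ t : ℝ, ‖Real.exp (-(2 * c₂) * (t - y) ^ 2)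
            * Real.exp (-(2 * c₂) * (t - (x + ζ)) ^ 2)‖)
            = fun y => C * Real.exp (-c₂ * (x - y + ζ) ^ 2) := by
          funext y
          have hn : ∀ t : ℝ, ‖Real.exp (-(2 * c₂) * (t - y) ^ 2)
              * Real.exp (-(2 * c₂) * (t - (x + ζ)) ^ 2)‖
              = Real.exp (-(2 * c₂) * (t - y) ^ 2) * Real.exp (-(2 * c₂) * (t - (x + ζ)) ^ 2) :=
            fun t => Real.norm_of_nonneg (by positivity)
          simp_rw [hn]
          exact key x y
        rw [he]
        have hcy : Continuous (fun y : ℝ => C * Real.exp (-c₂ * (x - y + ζ) ^ 2)) := by fun_prop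
        exact hcy.integrableOn_Ioc
    rw [MeasureTheory.integral_integral_swap hf]
    simp_rw [MeasureTheory.integral_mul_const]
    rfl
  simp_rw [swap1]
  -- second Fubini
  have hsm2 : AEStronglyMeasurable (Function.uncurry fun x t : ℝ =>
      B c₂ N t * Real.exp (-(2 * c₂) * (t - (x + ζ)) ^ 2))
      ((volume.restrict (Ioc (0 : ℝ) N)).prod volume) := by
    have h1 : StronglyMeasurable (fun p : ℝ × ℝ => B c₂ N p.2) :=
      B_sm.comp_measurable measurable_snd
    have h2 : Continuous (fun p : ℝ × ℝ => Real.exp (-(2 * c₂) * (p.2 - (p.1 + ζ)) ^ 2)) := by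
      fun_prop
    exact (h1.mul h2.stronglyMeasurable).aestronglyMeasurable
  have hf2 : Integrable (Function.uncurry fun x t : ℝ =>
      B c₂ N t * Real.exp (-(2 * c₂) * (t - (x + ζ)) ^ 2))
      ((volume.restrict (Ioc (0 : ℝ) N)).prod volume) := by
    refine (integrable_prod_iff hsm2).mpr ⟨?_, ?_⟩
    · filter_upwards with x
      refine ((integrable_gauss_shift (2 * c₂) (x + ζ) hb).const_mul N).mono'
        (B_sm.aestronglyMeasurable.mul (Continuous.aestronglyMeasurable (by fun_prop))) ?_
      filter_upwards with t
      simp only [Function.uncurry_apply_pair]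
      rw [Real.norm_of_nonneg (mul_nonneg (B_nonneg t) (Real.exp_pos _).le)]
      exact mul_le_mul_of_nonneg_right (B_le hc₂ hN t) (Real.exp_pos _).le
    · refine (integrable_const (N * Real.sqrt (Real.pi / (2 * c₂)))).mono'
        (hsm2.norm.integral_prod_right') ?_
      filter_upwards with x
      have hint : Integrable (fun t : ℝ => N * Real.exp (-(2 * c₂) * (t - (x + ζ)) ^ 2)) :=
        (integrable_gauss_shift (2 * c₂) (x + ζ) hb).const_mul N
      have hintf : Integrable (fun t : ℝ =>
          ‖B c₂ N t * Real.exp (-(2 * c₂) * (t - (x + ζ)) ^ 2)‖) := by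
        refine hint.mono'
          ((B_sm.aestronglyMeasurable.mul
            (Continuous.aestronglyMeasurable (by fun_prop))).norm) ?_
        filter_upwards with t
        rw [norm_norm, Real.norm_of_nonneg (mul_nonneg (B_nonneg t) (Real.exp_pos _).le)]
        exact mul_le_mul_of_nonneg_right (B_le hc₂ hN t) (Real.exp_pos _).le
      have hle : (∫ t : ℝ, ‖B c₂ N t * Real.exp (-(2 * c₂) * (t - (x + ζ)) ^ 2)‖)
          ≤ ∫ t : ℝ, N * Real.exp (-(2 * c₂) * (t - (x + ζ)) ^ 2) := by
        refine integral_mono hintf hint ?_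
        intro t
        dsimp only
        rw [Real.norm_of_nonneg (mul_nonneg (B_nonneg t) (Real.exp_pos _).le)]
        exact mul_le_mul_of_nonneg_right (B_le hc₂ hN t) (Real.exp_pos _).le
      have hval : (∫ t : ℝ, N * Real.exp (-(2 * c₂) * (t - (x + ζ)) ^ 2))
          = N * Real.sqrt (Real.pi / (2 * c₂)) := by
        rw [MeasureTheory.integral_const_mul, integral_gauss_shift]
      rw [Real.norm_of_nonneg (integral_nonneg fun t => norm_nonneg _)]
      rw [hval] at hle
      exact hle
  rw [MeasureTheory.integral_integral_swap hf2]
  congr 1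
  funext t
  rw [MeasureTheory.integral_const_mul]
  congr 1
  have : ∀ x : ℝ, t - (x + ζ) = t - ζ - x := fun x => by ring
  simp_rw [this]
  rfl

lemma B_sq_max (hc₂ : 0 < c₂) (hN : 0 < N) (ζ : ℝ) :
    (∫ t : ℝ, B c₂ N t * B c₂ N (t - ζ)) ≤ ∫ t : ℝ, B c₂ N t * B c₂ N t := by
  have hBi : Integrable (B c₂ N) := B_integrable hc₂
  have hBm : AEStronglyMeasurable (B c₂ N) volume := B_sm.aestronglyMeasurable
  have hBms : AEStronglyMeasurable (fun t : ℝ => B c₂ N (t - ζ)) volume :=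
    (B_sm.comp_measurable (measurable_id.sub_const ζ)).aestronglyMeasurable
  have hB2 : Integrable (fun t : ℝ => B c₂ N t * B c₂ N t) := by
    refine (hBi.const_mul N).mono' (hBm.mul hBm) ?_
    filter_upwards with t
    rw [Real.norm_of_nonneg (mul_nonneg (B_nonneg t) (B_nonneg t))]
    exact mul_le_mul_of_nonneg_right (B_le hc₂ hN t) (B_nonneg t)
  have hBsh2 : Integrable (fun t : ℝ => B c₂ N (t - ζ) * B c₂ N (t - ζ)) :=
    Integrable.comp_sub_right (f := fun s => B c₂ N s * B c₂ N s) hB2 ζ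
  have hBmix : Integrable (fun t : ℝ => B c₂ N t * B c₂ N (t - ζ)) := by
    refine (hBi.const_mul N).mono' (hBm.mul hBms) ?_
    filter_upwards with t
    rw [Real.norm_of_nonneg (mul_nonneg (B_nonneg t) (B_nonneg _))]
    calc B c₂ N t * B c₂ N (t - ζ) ≤ B c₂ N t * N :=
          mul_le_mul_of_nonneg_left (B_le hc₂ hN (t - ζ)) (B_nonneg t)
      _ = N * B c₂ N t := by ring
  calc (∫ t : ℝ, B c₂ N t * B c₂ N (t - ζ))
      ≤ ∫ t : ℝ, (B c₂ N t * B c₂ N t + B c₂ N (t - ζ) * B c₂ N (t - ζ)) / 2 := by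
        refine integral_mono hBmix ((hB2.add hBsh2).div_const 2) ?_
        intro t
        nlinarith [sq_nonneg (B c₂ N t - B c₂ N (t - ζ))]
    _ = ((∫ t : ℝ, B c₂ N t * B c₂ N t) + ∫ t : ℝ, B c₂ N (t - ζ) * B c₂ N (t - ζ)) / 2 := by
        rw [MeasureTheory.integral_div, integral_add hB2 hBsh2]
    _ = ∫ t : ℝ, B c₂ N t * B c₂ N t := by
        rw [integral_sub_right_eq_self (fun s => B c₂ N s * B c₂ N s) ζ]
        ring

end GaussMaxAux

theorem gaussian_convolution_maximized_at_origin
    (c₁ c₂ N : ℝ) (hc₁ : 0 < c₁) (hc₂ : 0 < c₂) (hN : 0 < N) (ζ : ℝ) :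
    ∫ x in (0 : ℝ)..N, ∫ y in (0 : ℝ)..N, c₁ * Real.exp (-c₂ * (x - y + ζ) ^ 2) ≤
      ∫ x in (0 : ℝ)..N, ∫ y in (0 : ℝ)..N, c₁ * Real.exp (-c₂ * (x - y) ^ 2) := by
  have hC : 0 < Real.sqrt (Real.pi / (4 * c₂)) := Real.sqrt_pos.mpr (by positivity)
  simp_rw [intervalIntegral.integral_of_le hN.le, MeasureTheory.integral_const_mul]
  have h0 := GaussMaxAux.main_id (N := N) hc₂ hN 0
  simp only [add_zero, sub_zero] at h0
  rw [GaussMaxAux.main_id hc₂ hN ζ, h0]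
  refine mul_le_mul_of_nonneg_left ?_ hc₁.le
  refine mul_le_mul_of_nonneg_left ?_ (inv_nonneg.mpr hC.le)
  exact GaussMaxAux.B_sq_max hc₂ hN ζ
end
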